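/- arXiv:1904.09216 — 5 statements merged into one kernel-verified Lean document; each statement's English description precedes it below -/
import Mathlib

section
/- Let x ∈ [0,1]^n \ {0}, u ∈ [0,1]^n, and ε > 0 be such that x + εu ∈ [0,1]^n. Let F : [0,1]^n → ℝ be a non-negative, monotone (coordinatewise nondecreasing) C² function which is one-sided σ-smooth at every point of the box {y : x ≤ y ≤ x + εu}. Then uᵀ∇F(x + εu) ≤ (‖x + εu‖₁ / ‖x‖₁)^{2σ} · uᵀ∇F(x). -/
open scoped BigOperators

/-- The gradient of `F` at `x`: vector of partial derivatives. -/
noncomputable def grad {n : ℕ} (F : (Fin n → ℝ) → ℝ) (x : Fin n → ℝ) : Fin n → ℝ :=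
  fun i => fderiv ℝ F x (Pi.single i 1)

/-- The Hessian of `F` at `x`: matrix of second partial derivatives. -/
noncomputable def hess {n : ℕ} (F : (Fin n → ℝ) → ℝ) (x : Fin n → ℝ) : Fin n → Fin n → ℝ :=
  fun i j => fderiv ℝ (fun y => grad F y i) x (Pi.single j 1)

/-- Euclidean dot product `uᵀ v`. -/
noncomputable def dotp {n : ℕ} (u v : Fin n → ℝ) : ℝ := ∑ i, u i * v i

/-- The ℓ¹ norm `‖x‖₁`. -/
noncomputable def l1 {n : ℕ} (x : Fin n → ℝ) : ℝ := ∑ i, |x i|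

/-- The quadratic form `uᵀ H u`. -/
noncomputable def quadForm {n : ℕ} (H : Fin n → Fin n → ℝ) (u : Fin n → ℝ) : ℝ :=
  ∑ i, ∑ j, u i * H i j * u j

/-- The unit box `[0,1]^n`. -/
def box (n : ℕ) : Set (Fin n → ℝ) := Set.Icc 0 1

/-- `F` is one-sided σ-smooth at `x`:
`(1/2)·uᵀ∇²F(x)u ≤ σ·(‖u‖₁/‖x‖₁)·uᵀ∇F(x)` for all `u ≥ 0`. -/
def OSSAt {n : ℕ} (σ : ℝ) (F : (Fin n → ℝ) → ℝ) (x : Fin n → ℝ) : Prop :=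
  ∀ u : Fin n → ℝ, 0 ≤ u →
    (1 / 2 : ℝ) * quadForm (hess F x) u ≤ σ * (l1 u / l1 x) * dotp u (grad F x)

section Aux

variable {n : ℕ}

lemma clm_expand (u : Fin n → ℝ) (L : (Fin n → ℝ) →L[ℝ] ℝ) :
    L u = ∑ j, u j * L (Pi.single j 1) := by
  have hu' : (∑ j, u j • (Pi.single j 1 : Fin n → ℝ)) = u := by
    ext k
    simp [Finset.sum_apply, Pi.single_apply, mul_ite]
  conv_lhs => rw [← hu']
  rw [map_sum]
  simp [smul_eq_mul]

lemma grad_diff (F : (Fin n → ℝ) → ℝ) (hF : ContDiff ℝ 2 F) (i : Fin n) :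
    Differentiable ℝ (fun y => grad F y i) := by
  have h1 : ContDiff ℝ 1 (fderiv ℝ F) := hF.fderiv_right (by norm_num)
  exact ((ContinuousLinearMap.apply ℝ ℝ (Pi.single i 1 : Fin n → ℝ)).differentiable).comp
    (h1.differentiable one_ne_zero)

end Aux

/-- Lemma `epsilonchangegradient`.
Let `x ∈ [0,1]^n \ {0}`, `u ∈ [0,1]^n`, `ε > 0` with `x + εu ∈ [0,1]^n`, and let
`F` be a non-negative, monotone C² function on `[0,1]^n` which is one-sided
σ-smooth on the box `{y | x ≤ y ≤ x + εu}`.  Then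
`uᵀ∇F(x+εu) ≤ (‖x+εu‖₁/‖x‖₁)^(2σ) · uᵀ∇F(x)`. -/
theorem stmt0 {n : ℕ} (σ : ℝ) (hσ : 0 ≤ σ) (F : (Fin n → ℝ) → ℝ)
    (hF : ContDiff ℝ 2 F)
    (x u : Fin n → ℝ) (ε : ℝ)
    (hx : x ∈ box n) (hx0 : x ≠ 0) (hu : u ∈ box n) (hε : 0 < ε)
    (hxu : x + ε • u ∈ box n)
    (hFnn : ∀ y ∈ box n, 0 ≤ F y)
    (hmono : ∀ y ∈ box n, ∀ z ∈ box n, y ≤ z → F y ≤ F z)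
    (hOSS : ∀ y : Fin n → ℝ, x ≤ y → y ≤ x + ε • u → OSSAt σ F y) :
    dotp u (grad F (x + ε • u)) ≤
      (l1 (x + ε • u) / l1 x) ^ (2 * σ) * dotp u (grad F x) := by

  classical
  set c := l1 x with hcdef
  set m := l1 u with hmdef
  have hx0' : (0 : Fin n → ℝ) ≤ x := hx.1
  have hu0 : (0 : Fin n → ℝ) ≤ u := hu.1
  have hm0 : 0 ≤ m := Finset.sum_nonneg fun i _ => abs_nonneg _
  have hcpos : 0 < c := by
    obtain ⟨i, hi⟩ := Function.ne_iff.mp hx0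
    refine Finset.sum_pos' (fun j _ => abs_nonneg _) ⟨i, Finset.mem_univ i, ?_⟩
    have : 0 < x i := lt_of_le_of_ne (hx0' i) (by simpa [eq_comm] using hi)
    simpa [abs_of_pos this] using this
  -- l1 along the line
  have hl1 : ∀ t : ℝ, 0 ≤ t → l1 (x + t • u) = c + t * m := by
    intro t ht
    have : ∀ i, |(x + t • u) i| = |x i| + t * |u i| := by
      intro i
      have h1 : 0 ≤ x i := hx0' i
      have h2 : 0 ≤ u i := hu0 i
      simp only [Pi.add_apply, Pi.smul_apply, smul_eq_mul]
      rw [abs_of_nonneg (by positivity), abs_of_nonneg h1, abs_of_nonneg h2]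
    simp only [l1, this, hcdef, hmdef]
    rw [Finset.sum_add_distrib, Finset.mul_sum]
  set g : ℝ → ℝ := fun t => dotp u (grad F (x + t • u)) with hgdef
  -- derivative of g
  have hgd : ∀ t : ℝ, HasDerivAt g (quadForm (hess F (x + t • u)) u) t := by
    intro t
    have hline : HasDerivAt (fun s : ℝ => x + s • u) u t := by
      simpa using ((hasDerivAt_id t).smul_const u).const_add x
    have hterm : ∀ i : Fin n, HasDerivAt (fun s => u i * grad F (x + s • u) i)
        (u i * (fderiv ℝ (fun y => grad F y i) (x + t • u) u)) t := by
      intro i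
      have hGi := (grad_diff F hF i) (x + t • u)
      exact (hGi.hasFDerivAt.comp_hasDerivAt t hline).const_mul (u i)
    have hsum := HasDerivAt.fun_sum (u := Finset.univ) (fun i _ => hterm i)
    have hde : (∑ i, u i * (fderiv ℝ (fun y => grad F y i) (x + t • u) u))
        = quadForm (hess F (x + t • u)) u := by
      unfold quadForm hess
      refine Finset.sum_congr rfl fun i _ => ?_
      rw [clm_expand u (fderiv ℝ (fun y => grad F y i) (x + t • u)), Finset.mul_sum]
      exact Finset.sum_congr rfl fun j _ => by ring
    rw [hde] at hsum
    exact hsum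
  -- the differential inequality from OSS
  have key : ∀ t ∈ Set.Icc (0:ℝ) ε,
      quadForm (hess F (x + t • u)) u * (c + t * m) ≤ 2 * σ * m * g t := by
    intro t ht
    have hpos : 0 < c + t * m := by nlinarith [ht.1, hm0]
    have hy1 : x ≤ x + t • u := by
      intro i
      simp only [Pi.add_apply, Pi.smul_apply, smul_eq_mul]
      have hui : (0:ℝ) ≤ u i := hu0 i
      nlinarith [mul_nonneg ht.1 hui]
    have hy2 : x + t • u ≤ x + ε • u := by
      intro i
      simp only [Pi.add_apply, Pi.smul_apply, smul_eq_mul]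
      have hui : (0:ℝ) ≤ u i := hu0 i
      nlinarith [mul_nonneg (sub_nonneg.mpr ht.2) hui]
    have h := hOSS _ hy1 hy2 u hu0
    rw [hl1 t ht.1] at h
    have h2 : σ * (m / (c + t * m)) * g t * (c + t * m) = σ * m * g t := by
      have ha : c + t * m ≠ 0 := hpos.ne'
      rw [mul_right_comm, mul_assoc σ, div_mul_cancel₀ m ha]
    have h3 := mul_le_mul_of_nonneg_right h hpos.le
    rw [h2] at h3
    have hgt : dotp u (grad F (x + t • u)) = g t := rfl
    nlinarith [h3]
  -- the antitone auxiliary function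
  set p : ℝ := -(2 * σ) with hpdef
  set φ : ℝ → ℝ := fun t => g t * (c + t * m) ^ p with hφdef
  have hψ : ∀ t : ℝ, 0 < c + t * m →
      HasDerivAt (fun s : ℝ => (c + s * m) ^ p) (p * (c + t * m) ^ (p - 1) * m) t := by
    intro t ht
    have h1 : HasDerivAt (fun s : ℝ => c + s * m) m t := by
      simpa using ((hasDerivAt_id t).mul_const m).const_add c
    have h2 := Real.hasDerivAt_rpow_const (x := c + t * m) (p := p) (Or.inl ht.ne')
    exact h2.comp t h1
  have hφd : ∀ t : ℝ, 0 < c + t * m → HasDerivAt φ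
      (quadForm (hess F (x + t • u)) u * (c + t * m) ^ p
        + g t * (p * (c + t * m) ^ (p - 1) * m)) t :=
    fun t ht => (hgd t).mul (hψ t ht)
  have hposIcc : ∀ t ∈ Set.Icc (0:ℝ) ε, 0 < c + t * m := by
    intro t ht; nlinarith [ht.1, hm0]
  have hanti : AntitoneOn φ (Set.Icc 0 ε) := by
    apply antitoneOn_of_deriv_nonpos (convex_Icc 0 ε)
    · intro t ht
      exact (hφd t (hposIcc t ht)).continuousAt.continuousWithinAt
    · rw [interior_Icc]
      intro t ht
      exact (hφd t (hposIcc t (Set.mem_Icc_of_Ioo ht))).differentiableAt.differentiableWithinAt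
    · rw [interior_Icc]
      intro t ht
      have htIcc := Set.mem_Icc_of_Ioo ht
      have hpos := hposIcc t htIcc
      rw [(hφd t hpos).deriv]
      have hpow : (c + t * m) ^ p = (c + t * m) ^ (p - 1) * (c + t * m) := by
        rw [← Real.rpow_add_one hpos.ne' (p - 1)]
        norm_num
      rw [hpow]
      have hA : (0:ℝ) ≤ (c + t * m) ^ (p - 1) := Real.rpow_nonneg hpos.le _
      have hk := key t htIcc
      have hk2 := mul_le_mul_of_nonneg_right hk hA
      have hp' : p = -(2 * σ) := hpdef
      rw [hp'] at hk2 hA ⊢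
      nlinarith [hk2]
  have h0mem : (0:ℝ) ∈ Set.Icc (0:ℝ) ε := ⟨le_refl 0, hε.le⟩
  have hεmem : ε ∈ Set.Icc (0:ℝ) ε := ⟨hε.le, le_refl ε⟩
  have hφle : g ε * (c + ε * m) ^ p ≤ g 0 * c ^ p := by
    have := hanti h0mem hεmem hε.le
    simpa [hφdef] using this
  have hEpos : 0 < c + ε * m := hposIcc ε hεmem
  -- rewrite goal
  have hgε : dotp u (grad F (x + ε • u)) = g ε := rfl
  have hg0 : dotp u (grad F x) = g 0 := by
    simp only [hgdef]
    norm_num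
  rw [hgε, hg0, hl1 ε hε.le]
  -- final algebra
  have hE2σ : (0:ℝ) < (c + ε * m) ^ (2 * σ) := Real.rpow_pos_of_pos hEpos _
  have hc2σ : (0:ℝ) < c ^ (2 * σ) := Real.rpow_pos_of_pos hcpos _
  have hpE : (c + ε * m) ^ p = ((c + ε * m) ^ (2 * σ))⁻¹ := Real.rpow_neg hEpos.le _
  have hpc : c ^ p = (c ^ (2 * σ))⁻¹ := Real.rpow_neg hcpos.le _
  have hdiv : ((c + ε * m) / c) ^ (2 * σ) = (c + ε * m) ^ (2 * σ) / c ^ (2 * σ) :=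
    Real.div_rpow hEpos.le hcpos.le _
  rw [hdiv]
  rw [hpE, hpc] at hφle
  rw [div_mul_eq_mul_div, le_div_iff₀ hc2σ]
  have h5 := mul_le_mul_of_nonneg_right hφle (mul_pos hE2σ hc2σ).le
  have e1 : g ε * ((c + ε * m) ^ (2 * σ))⁻¹ * ((c + ε * m) ^ (2 * σ) * c ^ (2 * σ))
      = g ε * c ^ (2 * σ) := by
    field_simp
  have e2 : g 0 * (c ^ (2 * σ))⁻¹ * ((c + ε * m) ^ (2 * σ) * c ^ (2 * σ))
      = (c + ε * m) ^ (2 * σ) * g 0 := by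
    field_simp
  rw [e1, e2] at h5
  exact h5
end

section
/- Let F : [0,1]^n → ℝ_{≥0} be a monotone one-sided σ-smooth C² function, α ∈ [0,1), and P ⊆ [0,1]^n a downward-closed compact convex polytope. Let v* ∈ argmax_{x∈P} ‖x‖₁ and OPT = max_{x∈P} F(x). Suppose x : [0,1] → ℝ^n is a differentiable curve with x(0) = α·v* and x'(t) = (1−α)·v(t) for all t, where v(t) ∈ argmax_{v∈P} vᵀ∇F(x(t)). Then x(1) ∈ P and F(x(1)) ≥ (1 − exp(−(1−α)·(α/(α+1))^{2σ}))·OPT. -/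
open scoped BigOperators

lemma l1_nonneg {n : ℕ} (x : Fin n → ℝ) : 0 ≤ l1 x :=
  Finset.sum_nonneg fun i _ => abs_nonneg _

lemma l1_of_nonneg {n : ℕ} {x : Fin n → ℝ} (hx : 0 ≤ x) : l1 x = ∑ i, x i :=
  Finset.sum_congr rfl fun i _ => abs_of_nonneg (hx i)

lemma l1_mono {n : ℕ} {x y : Fin n → ℝ} (hx : 0 ≤ x) (hxy : x ≤ y) : l1 x ≤ l1 y := by
  rw [l1_of_nonneg hx, l1_of_nonneg (le_trans hx hxy)]
  exact Finset.sum_le_sum fun i _ => hxy i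

lemma l1_add_smul {n : ℕ} {z u : Fin n → ℝ} (hz : 0 ≤ z) (hu : 0 ≤ u) {s : ℝ} (hs : 0 ≤ s) :
    l1 (z + s • u) = l1 z + s * l1 u := by
  have h1 : (0:Fin n → ℝ) ≤ z + s • u := fun i => by
    have := mul_nonneg hs (hu i)
    simpa using add_nonneg (hz i) this
  rw [l1_of_nonneg h1, l1_of_nonneg hz, l1_of_nonneg hu, Finset.mul_sum,
    ← Finset.sum_add_distrib]
  rfl

lemma l1_eq_zero {n : ℕ} {x : Fin n → ℝ} (hx : 0 ≤ x) (h : l1 x ≤ 0) : x = 0 := by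
  have := (Finset.sum_eq_zero_iff_of_nonneg (fun i _ => abs_nonneg (x i))).1
    (le_antisymm h (l1_nonneg x))
  funext i
  simpa using abs_eq_zero.1 (this i (Finset.mem_univ i))

variable {n : ℕ} {F : (Fin n → ℝ) → ℝ}

lemma dotp_nonneg {n : ℕ} {u v : Fin n → ℝ} (hu : 0 ≤ u) (hv : 0 ≤ v) : 0 ≤ dotp u v :=
  Finset.sum_nonneg fun i _ => mul_nonneg (hu i) (hv i)

lemma fderiv_eq_dotp {n : ℕ} {F : (Fin n → ℝ) → ℝ} {y : Fin n → ℝ} (w : Fin n → ℝ) :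
    fderiv ℝ F y w = dotp w (grad F y) := by
  have hw : w = ∑ i, w i • (Pi.single i 1 : Fin n → ℝ) := by
    ext j; simp [Pi.single_apply]
  conv_lhs => rw [hw]
  rw [map_sum]
  simp only [map_smul]
  rfl

-- same for any continuous linear map
lemma clm_eq_sum {n : ℕ} (L : (Fin n → ℝ) →L[ℝ] ℝ) (w : Fin n → ℝ) :
    L w = ∑ i, w i * L (Pi.single i 1) := by
  have hw : w = ∑ i, w i • (Pi.single i 1 : Fin n → ℝ) := by
    ext j; simp [Pi.single_apply]
  conv_lhs => rw [hw]
  rw [map_sum]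
  simp [smul_eq_mul]


lemma contDiff_grad (hF : ContDiff ℝ 2 F) (i : Fin n) :
    ContDiff ℝ 1 (fun y => grad F y i) := by
  have h := (hF.fderiv_right (m := 1) (by norm_num)).clm_apply
    (contDiff_const (c := (Pi.single i 1 : Fin n → ℝ)))
  exact h

lemma hasDerivAt_path (z u : Fin n → ℝ) (s : ℝ) :
    HasDerivAt (fun s : ℝ => z + s • u) u s := by
  simpa using ((hasDerivAt_id s).smul_const u).const_add z

lemma hasDerivAt_phi (hF : ContDiff ℝ 2 F) (z u : Fin n → ℝ) (s : ℝ) :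
    HasDerivAt (fun s : ℝ => F (z + s • u)) (dotp u (grad F (z + s • u))) s := by
  have hFd : HasFDerivAt F (fderiv ℝ F (z + s • u)) (z + s • u) :=
    (hF.differentiable (by norm_num) (z + s • u)).hasFDerivAt
  have := hFd.comp_hasDerivAt s (hasDerivAt_path z u s)
  simpa [fderiv_eq_dotp, Function.comp_def] using this

lemma hasDerivAt_phi' (hF : ContDiff ℝ 2 F) (z u : Fin n → ℝ) (s : ℝ) :
    HasDerivAt (fun s : ℝ => dotp u (grad F (z + s • u)))
      (quadForm (hess F (z + s • u)) u) s := by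
  have key : ∀ i : Fin n, HasDerivAt (fun s : ℝ => grad F (z + s • u) i)
      (∑ j, u j * hess F (z + s • u) i j) s := by
    intro i
    have hgi : DifferentiableAt ℝ (fun y => grad F y i) (z + s • u) :=
      (contDiff_grad hF i).differentiable (by norm_num) _
    have := hgi.hasFDerivAt.comp_hasDerivAt s (hasDerivAt_path z u s)
    have heq : fderiv ℝ (fun y => grad F y i) (z + s • u) u
        = ∑ j, u j * hess F (z + s • u) i j := clm_eq_sum _ u
    rw [heq] at this
    exact this
  have hsum : HasDerivAt (fun s : ℝ => ∑ i, u i * grad F (z + s • u) i)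
      (∑ i, u i * ∑ j, u j * hess F (z + s • u) i j) s :=
    HasDerivAt.fun_sum fun i _ => (key i).const_mul (u i)
  have : (∑ i, u i * ∑ j, u j * hess F (z + s • u) i j)
      = quadForm (hess F (z + s • u)) u := by
    unfold quadForm
    refine Finset.sum_congr rfl fun i _ => ?_
    rw [Finset.mul_sum]
    exact Finset.sum_congr rfl fun j _ => by ring
  rw [this] at hsum
  exact hsum

lemma continuous_phi' (hF : ContDiff ℝ 2 F) (z u : Fin n → ℝ) :
    Continuous (fun s : ℝ => dotp u (grad F (z + s • u))) := by
  unfold dotp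
  apply continuous_finset_sum
  intro i _
  exact continuous_const.mul (((contDiff_grad hF i).continuous).comp
    (continuous_const.add (continuous_id.smul continuous_const)))

lemma box_mem_iff {n : ℕ} {y : Fin n → ℝ} : y ∈ box n ↔ ∀ i, 0 ≤ y i ∧ y i ≤ 1 := by
  constructor
  · rintro ⟨h0, h1⟩ i; exact ⟨h0 i, h1 i⟩
  · intro h; exact ⟨fun i => (h i).1, fun i => (h i).2⟩


lemma grad_nonneg (hF : ContDiff ℝ 2 F)
    (hmono : ∀ y ∈ box n, ∀ z ∈ box n, y ≤ z → F y ≤ F z)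
    {y : Fin n → ℝ} (hy : y ∈ box n) (i : Fin n) : 0 ≤ grad F y i := by
  set q : ℝ → ℝ := fun h => F (y + h • (Pi.single i 1 : Fin n → ℝ)) with hq
  have hd : HasDerivAt q (dotp (Pi.single i 1) (grad F y)) 0 := by
    have hFd : HasFDerivAt F (fderiv ℝ F (y + (0:ℝ) • (Pi.single i 1 : Fin n → ℝ)))
        (y + (0:ℝ) • (Pi.single i 1 : Fin n → ℝ)) :=
      (hF.differentiable (by norm_num) _).hasFDerivAt
    have hp : HasDerivAt (fun s : ℝ => y + s • (Pi.single i 1 : Fin n → ℝ))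
        (Pi.single i 1) 0 := by
      simpa using ((hasDerivAt_id (0:ℝ)).smul_const (Pi.single i 1 : Fin n → ℝ)).const_add y
    have := hFd.comp_hasDerivAt 0 hp
    simp only [zero_smul, add_zero] at this
    have heq : fderiv ℝ F y (Pi.single i 1) = dotp (Pi.single i 1) (grad F y) := by
      unfold dotp grad
      rw [Finset.sum_eq_single i]
      · simp
      · intro j _ hj; simp [Pi.single_apply, hj]
      · simp
    rw [← heq]
    simpa [Function.comp_def] using this
  have hdot : dotp (Pi.single i 1 : Fin n → ℝ) (grad F y) = grad F y i := by
    unfold dotp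
    rw [Finset.sum_eq_single i]
    · simp
    · intro j _ hj; simp [Pi.single_apply, hj]
    · simp
  rw [hdot] at hd
  have hslope := hasDerivAt_iff_tendsto_slope.1 hd
  have hmem : ∀ h : ℝ, 0 ≤ y i + h → y i + h ≤ 1 →
      (y + h • (Pi.single i 1 : Fin n → ℝ)) ∈ box n := by
    intro h h0 h1
    rw [box_mem_iff]
    intro j
    by_cases hij : j = i
    · subst hij; simpa using ⟨h0, h1⟩
    · simp only [Pi.add_apply, Pi.smul_apply, Pi.single_eq_of_ne hij, smul_eq_mul, mul_zero,
        add_zero]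
      exact (box_mem_iff.1 hy j)
  rcases lt_or_eq_of_le (box_mem_iff.1 hy i).2 with hlt | heq1
  · -- y i < 1 : use right limits
    have hev : ∀ᶠ h in nhdsWithin (0:ℝ) (Set.Ioi 0), 0 ≤ slope q 0 h := by
      filter_upwards [Ioo_mem_nhdsGT_of_mem
          (show (0:ℝ) ∈ Set.Ico (0:ℝ) (1 - y i) from ⟨le_refl 0, sub_pos.2 hlt⟩)] with h hh
      obtain ⟨hh0, hh1⟩ := hh
      have hy' : (y + h • (Pi.single i 1 : Fin n → ℝ)) ∈ box n :=
        hmem h (by nlinarith [(box_mem_iff.1 hy i).1]) (by nlinarith)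
      have hle : q 0 ≤ q h := by
        apply hmono _ (by simpa [hq] using (by simpa using hy : y ∈ box n)) _ hy'
        · intro j
          by_cases hij : j = i
          · subst hij
            simp only [Pi.add_apply, Pi.smul_apply, Pi.single_eq_same, smul_eq_mul, mul_one]
            linarith
          · simp [Pi.single_apply, hij]
      have hsl : slope q 0 h = (q h - q 0) / h := by simp [slope_def_field]
      rw [hsl]
      exact div_nonneg (by linarith) (le_of_lt hh0)
    have := hslope.mono_left
      (nhdsWithin_mono (0:ℝ) (show Set.Ioi (0:ℝ) ⊆ {(0:ℝ)}ᶜ from fun x hx => ne_of_gt hx))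
    exact ge_of_tendsto this hev
  · -- y i = 1 : use left limits
    have hev : ∀ᶠ h in nhdsWithin (0:ℝ) (Set.Iio 0), 0 ≤ slope q 0 h := by
      filter_upwards [Ioo_mem_nhdsLT_of_mem
          (show (0:ℝ) ∈ Set.Ioc (-1:ℝ) (0:ℝ) from ⟨by norm_num, le_refl 0⟩)] with h hh
      obtain ⟨hh0, hh1⟩ := hh
      have hy' : (y + h • (Pi.single i 1 : Fin n → ℝ)) ∈ box n :=
        hmem h (by rw [heq1]; linarith) (by rw [heq1]; linarith)
      have hle : q h ≤ q 0 := by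
        apply hmono _ hy' _ (by simpa [hq] using (by simpa using hy : y ∈ box n))
        · intro j
          by_cases hij : j = i
          · subst hij
            simp only [Pi.add_apply, Pi.smul_apply, Pi.single_eq_same, smul_eq_mul, mul_one]
            linarith
          · simp [Pi.single_apply, hij]
      have hsl : slope q 0 h = (q h - q 0) / h := by simp [slope_def_field]
      rw [hsl]
      exact div_nonneg_iff.2 (Or.inr ⟨by linarith, le_of_lt hh1⟩)
    have := hslope.mono_left
      (nhdsWithin_mono (0:ℝ) (show Set.Iio (0:ℝ) ⊆ {(0:ℝ)}ᶜ from fun x hx => ne_of_lt hx))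
    exact ge_of_tendsto this hev

lemma phi'_nonneg (hF : ContDiff ℝ 2 F)
    (hmono : ∀ y ∈ box n, ∀ z ∈ box n, y ≤ z → F y ≤ F z)
    {z u : Fin n → ℝ} (hz : z ∈ box n) (hzu : z + u ∈ box n) (hu : 0 ≤ u)
    {s : ℝ} (hs0 : 0 ≤ s) (hs1 : s ≤ 1) : 0 ≤ dotp u (grad F (z + s • u)) := by
  have hmem : z + s • u ∈ box n := by
    rw [box_mem_iff]
    intro i
    have h1 := (box_mem_iff.1 hz i).1
    have h2 := (box_mem_iff.1 hzu i).2
    have h3 := (box_mem_iff.1 hzu i).1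
    have hui := hu i
    simp only [Pi.add_apply, Pi.smul_apply, smul_eq_mul] at h2 h3 ⊢
    constructor
    · nlinarith [mul_nonneg hs0 hui]
    · nlinarith [mul_nonneg (sub_nonneg.2 hs1) hui]
  exact dotp_nonneg hu (fun i => grad_nonneg hF hmono hmem i)

lemma key_general (hF : ContDiff ℝ 2 F) {σ : ℝ} (hσ : 0 ≤ σ)
    (hmono : ∀ y ∈ box n, ∀ z ∈ box n, y ≤ z → F y ≤ F z)
    (hOSS : ∀ y ∈ box n, y ≠ 0 → OSSAt σ F y)
    {z u : Fin n → ℝ} (hz : z ∈ box n) (hzu : z + u ∈ box n) (hu : 0 ≤ u)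
    {B : ℝ} (hL : 0 < l1 z) (hBu : l1 z + l1 u ≤ B * l1 z) :
    F (z + u) ≤ F z + B ^ (2 * σ) * dotp u (grad F z) := by
  have hz0 : (0:Fin n → ℝ) ≤ z := fun i => (box_mem_iff.1 hz i).1
  set L := l1 z with hLdef
  set U := l1 u with hUdef
  have hU : 0 ≤ U := l1_nonneg u
  have hB : 1 ≤ B := by nlinarith
  set e : ℝ := -(2 * σ) with hedef
  set φ' : ℝ → ℝ := fun s => dotp u (grad F (z + s • u)) with hφdef
  have hWpos : ∀ s : ℝ, 0 ≤ s → 0 < L + s * U := fun s hs => by nlinarith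
  have hl1seg : ∀ s : ℝ, 0 ≤ s → l1 (z + s • u) = L + s * U := fun s hs =>
    l1_add_smul hz0 hu hs
  have hseg_ne : ∀ s : ℝ, 0 ≤ s → z + s • u ≠ 0 := by
    intro s hs h0
    have := hl1seg s hs
    rw [h0] at this
    have : l1 (0 : Fin n → ℝ) = L + s * U := this
    have hz' : l1 (0 : Fin n → ℝ) = 0 := by simp [l1]
    nlinarith [hWpos s hs]
  have hseg_box : ∀ s ∈ Set.Icc (0:ℝ) 1, z + s • u ∈ box n := by
    intro s hs
    rw [box_mem_iff]
    intro i
    have h1 := (box_mem_iff.1 hz i).1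
    have h2 := (box_mem_iff.1 hzu i).2
    have hui := hu i
    simp only [Pi.add_apply, Pi.smul_apply, smul_eq_mul] at h2 ⊢
    exact ⟨by nlinarith [mul_nonneg hs.1 hui], by nlinarith [mul_nonneg (sub_nonneg.2 hs.2) hui]⟩
  have hφnn : ∀ s ∈ Set.Icc (0:ℝ) 1, 0 ≤ φ' s := fun s hs =>
    phi'_nonneg hF hmono hz hzu hu hs.1 hs.2
  -- ρ is antitone on [0,1]
  have hρanti : AntitoneOn (fun s => φ' s * (L + s * U) ^ e) (Set.Icc 0 1) := by
    apply antitoneOn_of_hasDerivWithinAt_nonpos (convex_Icc 0 1)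
      (f' := fun s => quadForm (hess F (z + s • u)) u * (L + s * U) ^ e
        + φ' s * (e * (L + s * U) ^ (e - 1) * U))
    · apply ContinuousOn.mul (continuous_phi' hF z u).continuousOn
      exact ContinuousOn.rpow_const
        ((continuous_const.add (continuous_id.mul continuous_const)).continuousOn)
        (fun s hs => Or.inl (ne_of_gt (hWpos s hs.1)))
    · intro s hs
      rw [interior_Icc] at hs
      have hW : HasDerivAt (fun s : ℝ => L + s * U) U s := by
        simpa using ((hasDerivAt_id s).mul_const U).const_add L
      have hWr : HasDerivAt (fun s : ℝ => (L + s * U) ^ e)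
          (e * (L + s * U) ^ (e - 1) * U) s := by
        have h2 := (Real.hasDerivAt_rpow_const
          (x := L + s * U) (p := e) (Or.inl (ne_of_gt (hWpos s hs.1.le)))).comp s hW
        simpa [Function.comp_def] using h2
      exact (((hasDerivAt_phi' hF z u s).mul hWr)).hasDerivWithinAt
    · intro s hs
      rw [interior_Icc] at hs
      have hs0 : (0:ℝ) ≤ s := hs.1.le
      have hWp := hWpos s hs0
      have hq : quadForm (hess F (z + s • u)) u ≤ 2 * (σ * (U / (L + s * U)) * φ' s) := by
        have := hOSS _ (hseg_box s ⟨hs0, hs.2.le⟩) (hseg_ne s hs0) u hu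
        rw [hl1seg s hs0] at this
        linarith
      have hWe : (0:ℝ) < (L + s * U) ^ e := Real.rpow_pos_of_pos hWp e
      have h1 : quadForm (hess F (z + s • u)) u * (L + s * U) ^ e
          ≤ 2 * (σ * (U / (L + s * U)) * φ' s) * (L + s * U) ^ e :=
        mul_le_mul_of_nonneg_right hq hWe.le
      have hcancel : 2 * (σ * (U / (L + s * U)) * φ' s) * (L + s * U) ^ e
          = -(φ' s * (e * (L + s * U) ^ (e - 1) * U)) := by
        rw [Real.rpow_sub_one (ne_of_gt hWp), hedef]
        field_simp
      have h3 := hcancel ▸ h1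
      linarith
  -- pointwise bound on φ'
  have hφbd : ∀ s ∈ Set.Icc (0:ℝ) 1, φ' s ≤ φ' 0 * B ^ (2 * σ) := by
    intro s hs
    have h0 : (0:ℝ) ∈ Set.Icc (0:ℝ) 1 := by norm_num
    have h := hρanti h0 hs hs.1
    simp only [zero_mul, add_zero] at h
    have hWp := hWpos s hs.1
    have hWe2σ : (0:ℝ) < (L + s * U) ^ (2*σ) := Real.rpow_pos_of_pos hWp _
    have hL2σ : (0:ℝ) < L ^ (2*σ) := Real.rpow_pos_of_pos hL _
    have hinv : ∀ x : ℝ, 0 < x → x ^ e = (x ^ (2*σ))⁻¹ := by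
      intro x hx
      rw [hedef, Real.rpow_neg hx.le]
    have h2 : φ' s * ((L + s * U) ^ (2*σ))⁻¹ ≤ φ' 0 * (L ^ (2*σ))⁻¹ := by
      rw [← hinv _ hWp, ← hinv _ hL]
      exact h
    have hWle : (L + s * U) ^ (2*σ) ≤ B ^ (2*σ) * L ^ (2*σ) := by
      rw [← Real.mul_rpow (by linarith : (0:ℝ) ≤ B) hL.le]
      exact Real.rpow_le_rpow (by positivity) (by nlinarith [hs.2]) (by positivity)
    have hφs := hφnn s hs
    have hφ0 := hφnn 0 h0
    calc φ' s = φ' s * ((L + s * U) ^ (2*σ))⁻¹ * (L + s * U) ^ (2*σ) := by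
          field_simp
      _ ≤ φ' 0 * (L ^ (2*σ))⁻¹ * (L + s * U) ^ (2*σ) :=
          mul_le_mul_of_nonneg_right h2 hWe2σ.le
      _ ≤ φ' 0 * (L ^ (2*σ))⁻¹ * (B ^ (2*σ) * L ^ (2*σ)) := by
          apply mul_le_mul_of_nonneg_left hWle
          positivity
      _ = φ' 0 * B ^ (2*σ) := by field_simp
  -- integrate the bound
  have hψ : AntitoneOn (fun s : ℝ => F (z + s • u) - s * (φ' 0 * B ^ (2 * σ)))
      (Set.Icc 0 1) := by
    apply antitoneOn_of_hasDerivWithinAt_nonpos (convex_Icc 0 1)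
      (f' := fun s => φ' s - φ' 0 * B ^ (2 * σ))
    · apply ContinuousOn.sub
      · exact (hF.continuous.comp
          (continuous_const.add (continuous_id.smul continuous_const))).continuousOn
      · exact (continuous_id.mul continuous_const).continuousOn
    · intro s hs
      have hmul : HasDerivAt (fun s : ℝ => s * (φ' 0 * B ^ (2 * σ)))
          (φ' 0 * B ^ (2 * σ)) s := by
        simpa using (hasDerivAt_id s).mul_const (φ' 0 * B ^ (2 * σ))
      exact ((hasDerivAt_phi hF z u s).sub hmul).hasDerivWithinAt
    · intro s hs
      rw [interior_Icc] at hs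
      have := hφbd s ⟨hs.1.le, hs.2.le⟩
      linarith
  have h01 := hψ (by norm_num : (0:ℝ) ∈ Set.Icc (0:ℝ) 1)
    (by norm_num : (1:ℝ) ∈ Set.Icc (0:ℝ) 1) (by norm_num)
  simp only [one_smul, zero_smul, add_zero, one_mul, zero_mul, sub_zero] at h01
  have hφ0eq : φ' 0 = dotp u (grad F z) := by
    simp [hφdef]
  rw [hφ0eq] at h01
  linarith


lemma key_sigma0 (hF : ContDiff ℝ 2 F)
    (hmono : ∀ y ∈ box n, ∀ z ∈ box n, y ≤ z → F y ≤ F z)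
    (hOSS : ∀ y ∈ box n, y ≠ 0 → OSSAt 0 F y)
    {z u : Fin n → ℝ} (hz : z ∈ box n) (hzu : z + u ∈ box n) (hu : 0 ≤ u) :
    F (z + u) ≤ F z + dotp u (grad F z) := by
  by_cases hu0 : u = 0
  · subst hu0
    simp [dotp]
  have hz0 : (0:Fin n → ℝ) ≤ z := fun i => (box_mem_iff.1 hz i).1
  have hl1u : 0 < l1 u := by
    rcases lt_or_eq_of_le (l1_nonneg u) with h | h
    · exact h
    · exact absurd (l1_eq_zero hu (le_of_eq h.symm)) hu0
  set φ' : ℝ → ℝ := fun s => dotp u (grad F (z + s • u)) with hφdef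
  have hφanti : AntitoneOn φ' (Set.Icc 0 1) := by
    apply antitoneOn_of_hasDerivWithinAt_nonpos (convex_Icc 0 1)
      (f' := fun s => quadForm (hess F (z + s • u)) u)
    · exact (continuous_phi' hF z u).continuousOn
    · intro s hs
      exact (hasDerivAt_phi' hF z u s).hasDerivWithinAt
    · intro s hs
      rw [interior_Icc] at hs
      have hne : z + s • u ≠ 0 := by
        intro h0
        have h1 : l1 (z + s • u) = l1 z + s * l1 u := l1_add_smul hz0 hu hs.1.le
        rw [h0] at h1
        have : l1 (0 : Fin n → ℝ) = 0 := by simp [l1]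
        nlinarith [l1_nonneg z, mul_pos hs.1 hl1u]
      have hsbox : z + s • u ∈ box n := by
        rw [box_mem_iff]
        intro i
        have h1 := (box_mem_iff.1 hz i).1
        have h2 := (box_mem_iff.1 hzu i).2
        have hui := hu i
        simp only [Pi.add_apply, Pi.smul_apply, smul_eq_mul] at h2 ⊢
        exact ⟨by nlinarith [mul_nonneg hs.1.le hui],
          by nlinarith [mul_nonneg (sub_nonneg.2 hs.2.le) hui]⟩
      have := hOSS _ hsbox hne u hu
      simp only [zero_mul] at this
      linarith
  have hψ : AntitoneOn (fun s : ℝ => F (z + s • u) - s * φ' 0) (Set.Icc 0 1) := by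
    apply antitoneOn_of_hasDerivWithinAt_nonpos (convex_Icc 0 1)
      (f' := fun s => φ' s - φ' 0)
    · apply ContinuousOn.sub
      · exact (hF.continuous.comp
          (continuous_const.add (continuous_id.smul continuous_const))).continuousOn
      · exact (continuous_id.mul continuous_const).continuousOn
    · intro s hs
      have hmul : HasDerivAt (fun s : ℝ => s * φ' 0) (φ' 0) s := by
        simpa using (hasDerivAt_id s).mul_const (φ' 0)
      exact ((hasDerivAt_phi hF z u s).sub hmul).hasDerivWithinAt
    · intro s hs
      rw [interior_Icc] at hs
      have := hφanti (by norm_num : (0:ℝ) ∈ Set.Icc (0:ℝ) 1)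
        ⟨hs.1.le, hs.2.le⟩ hs.1.le
      linarith
  have h01 := hψ (by norm_num : (0:ℝ) ∈ Set.Icc (0:ℝ) 1)
    (by norm_num : (1:ℝ) ∈ Set.Icc (0:ℝ) 1) (by norm_num)
  simp only [one_smul, zero_smul, add_zero, one_mul, zero_mul, sub_zero] at h01
  have hφ0eq : φ' 0 = dotp u (grad F z) := by simp [hφdef]
  rw [hφ0eq] at h01
  linarith

lemma dotp_smul_left {u w : Fin n → ℝ} (c : ℝ) : dotp (c • u) w = c * dotp u w := by
  unfold dotp
  rw [Finset.mul_sum]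
  exact Finset.sum_congr rfl fun i _ => by simp [mul_assoc]


/-- Theorem `greedyBound`: jump-start continuous greedy.
If `F : [0,1]^n → ℝ≥0` is monotone and one-sided σ-smooth, `α ∈ [0,1)`, `P` is a
downward-closed compact convex polytope in `[0,1]^n`, `v* ∈ argmax_{x∈P} ‖x‖₁`,
`OPT = max_{x∈P} F(x)`, and `x : [0,1] → ℝ^n` is a differentiable curve with
`x(0) = α·v*` and `x'(t) = (1-α)·v(t)` where `v(t) ∈ argmax_{v∈P} vᵀ∇F(x(t))`, then
`x(1) ∈ P` and `F(x(1)) ≥ (1 - exp(-(1-α)·(α/(α+1))^(2σ)))·OPT`. -/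
theorem stmt1 {n : ℕ} (σ α : ℝ) (hσ : 0 ≤ σ) (hα : α ∈ Set.Ico (0 : ℝ) 1)
    (F : (Fin n → ℝ) → ℝ) (hF : ContDiff ℝ 2 F)
    (hFnn : ∀ y ∈ box n, 0 ≤ F y)
    (hmono : ∀ y ∈ box n, ∀ z ∈ box n, y ≤ z → F y ≤ F z)
    (hOSS : ∀ y ∈ box n, y ≠ 0 → OSSAt σ F y)
    (P : Set (Fin n → ℝ)) (hPbox : P ⊆ box n) (hPconv : Convex ℝ P)
    (hPcomp : IsCompact P)
    (hPdc : ∀ y ∈ P, ∀ z : Fin n → ℝ, 0 ≤ z → z ≤ y → z ∈ P)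
    (vstar : Fin n → ℝ) (hvP : vstar ∈ P) (hvmax : ∀ y ∈ P, l1 y ≤ l1 vstar)
    (xopt : Fin n → ℝ) (hoptP : xopt ∈ P) (hopt : ∀ y ∈ P, F y ≤ F xopt)
    (x v : ℝ → Fin n → ℝ)
    (hx0 : x 0 = α • vstar)
    (hv : ∀ t ∈ Set.Icc (0 : ℝ) 1,
      v t ∈ P ∧ ∀ w ∈ P, dotp w (grad F (x t)) ≤ dotp (v t) (grad F (x t)))
    (hderiv : ∀ t ∈ Set.Icc (0 : ℝ) 1, HasDerivAt x ((1 - α) • v t) t) :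
    x 1 ∈ P ∧
      (1 - Real.exp (-((1 - α) * (α / (α + 1)) ^ (2 * σ)))) * F xopt ≤ F (x 1) := by
  obtain ⟨hα0, hα1⟩ := hα
  have h1α : (0:ℝ) < 1 - α := sub_pos.2 hα1
  have h0P : (0 : Fin n → ℝ) ∈ P :=
    hPdc vstar hvP 0 (le_refl 0) (fun i => ((box_mem_iff.1 (hPbox hvP)) i).1)
  have hvstar_box : vstar ∈ box n := hPbox hvP
  -- x 1 ∈ P via FTC
  have hIcc : Set.Icc (0:ℝ) 1 = Set.uIcc (0:ℝ) 1 := (Set.uIcc_of_le (by norm_num)).symm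
  have hInt : IntervalIntegrable (fun t => (1 - α) • v t) MeasureTheory.volume 0 1 := by
    rw [intervalIntegrable_iff, Set.uIoc_of_le (by norm_num : (0:ℝ) ≤ 1)]
    constructor
    · apply (stronglyMeasurable_deriv x).aestronglyMeasurable.congr
      filter_upwards [MeasureTheory.ae_restrict_mem measurableSet_Ioc] with t ht
      exact (hderiv t ⟨ht.1.le, ht.2⟩).deriv
    · apply MeasureTheory.HasFiniteIntegral.of_bounded (C := 1 - α)
      rw [MeasureTheory.ae_restrict_iff' measurableSet_Ioc]
      apply MeasureTheory.ae_of_all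
      intro t ht
      have hvb : v t ∈ box n := hPbox (hv t ⟨ht.1.le, ht.2⟩).1
      rw [norm_smul]
      have h1 : ‖v t‖ ≤ 1 := by
        rw [pi_norm_le_iff_of_nonneg (by norm_num)]
        intro i
        have := box_mem_iff.1 hvb i
        rw [Real.norm_eq_abs, abs_le]
        constructor <;> linarith [this.1, this.2]
      have h2 : ‖(1-α)‖ = 1 - α := abs_of_pos h1α
      nlinarith [norm_nonneg (v t)]
  have hFTC : ∫ t in (0:ℝ)..1, (1 - α) • v t = x 1 - x 0 :=
    intervalIntegral.integral_eq_sub_of_hasDerivAt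
      (fun t ht => hderiv t (by rwa [hIcc])) hInt
  have hIntv : IntervalIntegrable v MeasureTheory.volume 0 1 := by
    have h := hInt.smul (1 - α)⁻¹
    have he : ((1 - α)⁻¹ • fun t => (1 - α) • v t) = v := by
      funext t
      simp only [Pi.smul_apply, smul_smul, inv_mul_cancel₀ (ne_of_gt h1α), one_smul]
    rwa [he] at h
  have hw : (∫ t in (0:ℝ)..1, v t) ∈ P := by
    rw [intervalIntegral.integral_of_le (by norm_num : (0:ℝ) ≤ 1)]
    haveI : MeasureTheory.IsProbabilityMeasure
        (MeasureTheory.volume.restrict (Set.Ioc (0:ℝ) 1)) := by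
      constructor
      rw [MeasureTheory.Measure.restrict_apply_univ, Real.volume_Ioc]
      norm_num
    apply hPconv.integral_mem hPcomp.isClosed
    · rw [MeasureTheory.ae_restrict_iff' measurableSet_Ioc]
      exact MeasureTheory.ae_of_all _ fun t ht => (hv t ⟨ht.1.le, ht.2⟩).1
    · have := intervalIntegrable_iff.1 hIntv
      rwa [Set.uIoc_of_le (by norm_num : (0:ℝ) ≤ 1)] at this
  have hx1 : x 1 = α • vstar + (1 - α) • ∫ t in (0:ℝ)..1, v t := by
    rw [intervalIntegral.integral_smul] at hFTC
    rw [← hx0]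
    have : x 1 = x 0 + (x 1 - x 0) := by abel
    rw [this, ← hFTC]
  have hx1P : x 1 ∈ P := by
    rw [hx1]
    exact hPconv hvP hw hα0 h1α.le (by ring)
  refine ⟨hx1P, ?_⟩
  set β : ℝ := (α / (α + 1)) ^ (2 * σ) with hβdef
  have hβ0 : 0 ≤ β := Real.rpow_nonneg (by positivity) _
  have hxcomp : ∀ i : Fin n, ∀ t ∈ Set.Icc (0:ℝ) 1,
      HasDerivAt (fun t => x t i) ((1 - α) * v t i) t := by
    intro i t ht
    have := (ContinuousLinearMap.proj (R := ℝ) (φ := fun _ : Fin n => ℝ)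
      i).hasFDerivAt.comp_hasDerivAt t (hderiv t ht)
    simpa [Function.comp_def] using this
  have hxmono : ∀ i : Fin n, MonotoneOn (fun t => x t i) (Set.Icc 0 1) := by
    intro i
    apply monotoneOn_of_hasDerivWithinAt_nonneg (convex_Icc 0 1)
      (f' := fun t => (1 - α) * v t i)
    · exact fun t ht => ((hxcomp i t ht).continuousAt.continuousWithinAt)
    · intro t ht
      rw [interior_Icc] at ht
      exact (hxcomp i t ⟨ht.1.le, ht.2.le⟩).hasDerivWithinAt
    · intro t ht
      rw [interior_Icc] at ht
      exact mul_nonneg h1α.le (box_mem_iff.1 (hPbox (hv t ⟨ht.1.le, ht.2.le⟩).1) i).1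
  have hx_ge : ∀ t ∈ Set.Icc (0:ℝ) 1, ∀ i, α * vstar i ≤ x t i := by
    intro t ht i
    have h := hxmono i (Set.left_mem_Icc.2 (by norm_num)) ht ht.1
    simp only [hx0, Pi.smul_apply, smul_eq_mul] at h
    exact h
  have hx_le1 : ∀ t ∈ Set.Icc (0:ℝ) 1, ∀ i, x t i ≤ 1 := by
    intro t ht i
    have hanti : AntitoneOn (fun t => x t i - (1 - α) * t) (Set.Icc 0 1) := by
      apply antitoneOn_of_hasDerivWithinAt_nonpos (convex_Icc 0 1)
        (f' := fun t => (1 - α) * v t i - (1 - α))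
      · apply ContinuousOn.sub
        · exact fun t ht => ((hxcomp i t ht).continuousAt.continuousWithinAt)
        · exact (continuous_const.mul continuous_id).continuousOn
      · intro t ht
        rw [interior_Icc] at ht
        have hmul : HasDerivAt (fun t : ℝ => (1 - α) * t) (1 - α) t := by
          simpa using (hasDerivAt_id t).const_mul (1 - α)
        exact ((hxcomp i t ⟨ht.1.le, ht.2.le⟩).sub hmul).hasDerivWithinAt
      · intro t ht
        rw [interior_Icc] at ht
        have := (box_mem_iff.1 (hPbox (hv t ⟨ht.1.le, ht.2.le⟩).1) i).2
        nlinarith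
    have h := hanti (Set.left_mem_Icc.2 (by norm_num)) ht ht.1
    simp only [hx0, Pi.smul_apply, smul_eq_mul, mul_zero, sub_zero] at h
    have hb := box_mem_iff.1 hvstar_box i
    nlinarith [ht.2, ht.1, hb.1, hb.2]
  have hxbox : ∀ t ∈ Set.Icc (0:ℝ) 1, x t ∈ box n := fun t ht =>
    box_mem_iff.2 fun i =>
      ⟨le_trans (mul_nonneg hα0 (box_mem_iff.1 hvstar_box i).1) (hx_ge t ht i),
        hx_le1 t ht i⟩
  -- the core differential inequality
  have hclaim : ∀ t ∈ Set.Icc (0:ℝ) 1,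
      β * (F xopt - F (x t)) ≤ dotp (v t) (grad F (x t)) := by
    intro t ht
    obtain ⟨hvtP, hvtmax⟩ := hv t ht
    set z := x t with hzdef
    have hzbox : z ∈ box n := hxbox t ht
    have hz0 : (0:Fin n → ℝ) ≤ z := fun i => (box_mem_iff.1 hzbox i).1
    have hdv0 : 0 ≤ dotp (v t) (grad F z) := by
      have h := hvtmax 0 h0P
      simpa [dotp] using h
    have hoptbox : xopt ∈ box n := hPbox hoptP
    have hxopt0 : (0:Fin n → ℝ) ≤ xopt := fun i => (box_mem_iff.1 hoptbox i).1
    by_cases hVz : l1 vstar ≤ 0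
    · have hx0' : xopt = 0 := l1_eq_zero hxopt0 (le_trans (hvmax xopt hoptP) hVz)
      have h0box : (0:Fin n → ℝ) ∈ box n := box_mem_iff.2 fun i => by norm_num
      have hle : F xopt ≤ F z := by
        rw [hx0']
        exact hmono 0 h0box z hzbox hz0
      nlinarith
    push_neg at hVz
    set u : Fin n → ℝ := fun i => max (xopt i - z i) 0 with hudef
    have hu0 : (0:Fin n → ℝ) ≤ u := fun i => le_max_right _ _
    have hule : u ≤ xopt := fun i => max_le
      (by have h := hz0 i; simp only [Pi.zero_apply] at h; linarith) (hxopt0 i)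
    have huP : u ∈ P := hPdc xopt hoptP u hu0 hule
    have hzu_box : z + u ∈ box n := by
      rw [box_mem_iff]
      intro i
      have h1 := box_mem_iff.1 hzbox i
      have h2 := box_mem_iff.1 hoptbox i
      refine ⟨by simpa using add_nonneg (hz0 i) (hu0 i), ?_⟩
      show z i + max (xopt i - z i) 0 ≤ 1
      rcases le_total (xopt i - z i) 0 with h | h
      · rw [max_eq_right h]; linarith [h1.2]
      · rw [max_eq_left h]; linarith [h2.2]
    have hxopt_le : xopt ≤ z + u := by
      intro i
      show xopt i ≤ z i + max (xopt i - z i) 0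
      linarith [le_max_left (xopt i - z i) 0]
    have hFopt_le : F xopt ≤ F (z + u) := hmono xopt hoptbox (z + u) hzu_box hxopt_le
    have hudot : dotp u (grad F z) ≤ dotp (v t) (grad F z) := hvtmax u huP
    by_cases hA : α = 0
    · subst hA
      by_cases hS : σ = 0
      · subst hS
        have hkey := key_sigma0 hF hmono hOSS hzbox hzu_box hu0
        have hβ1 : β = 1 := by rw [hβdef]; norm_num
        rw [hβ1]
        linarith
      · have hβz : β = 0 := by
          rw [hβdef, show (0:ℝ) / (0 + 1) = 0 by norm_num]
          exact Real.zero_rpow (by positivity)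
        rw [hβz, zero_mul]
        exact hdv0
    · have hαpos : 0 < α := lt_of_le_of_ne hα0 (Ne.symm hA)
      have hαv : α * l1 vstar ≤ l1 z := by
        have h1 : l1 (α • vstar) ≤ l1 z :=
          l1_mono (fun i => by
              simpa using mul_nonneg hαpos.le (box_mem_iff.1 hvstar_box i).1)
            (fun i => by simpa using hx_ge t ht i)
        have h2 : l1 (α • vstar) = α * l1 vstar := by
          unfold l1
          rw [Finset.mul_sum]
          exact Finset.sum_congr rfl fun i _ => by
            rw [Pi.smul_apply, smul_eq_mul, abs_mul, abs_of_nonneg hαpos.le]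
        linarith
      have hzL : 0 < l1 z := lt_of_lt_of_le (mul_pos hαpos hVz) hαv
      have hBu : l1 z + l1 u ≤ ((α + 1) / α) * l1 z := by
        have h1 : l1 u ≤ l1 vstar := le_trans (l1_mono hu0 hule) (hvmax xopt hoptP)
        rw [div_mul_eq_mul_div, le_div_iff₀ hαpos]
        nlinarith
      have hkey := key_general hF hσ hmono hOSS hzbox hzu_box hu0 hzL hBu
      have hβB : β * ((α + 1) / α) ^ (2 * σ) = 1 := by
        rw [hβdef, ← Real.mul_rpow (by positivity) (by positivity),
          show α / (α + 1) * ((α + 1) / α) = 1 by field_simp]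
        exact Real.one_rpow _
      have hdu0 : 0 ≤ dotp u (grad F z) :=
        dotp_nonneg hu0 fun i => grad_nonneg hF hmono hzbox i
      have h3 : β * (F xopt - F z) ≤ β * (F (z + u) - F z) :=
        mul_le_mul_of_nonneg_left (by linarith) hβ0
      have h4 : β * (F (z + u) - F z) ≤ β * (((α + 1) / α) ^ (2 * σ) * dotp u (grad F z)) :=
        mul_le_mul_of_nonneg_left (by linarith) hβ0
      have h5 : β * (((α + 1) / α) ^ (2 * σ) * dotp u (grad F z)) = dotp u (grad F z) := by
        rw [← mul_assoc, hβB, one_mul]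
      linarith
  -- derivative of t ↦ F (x t)
  have hg : ∀ t ∈ Set.Icc (0:ℝ) 1,
      HasDerivAt (fun t => F (x t)) ((1 - α) * dotp (v t) (grad F (x t))) t := by
    intro t ht
    have hFd : HasFDerivAt F (fderiv ℝ F (x t)) (x t) :=
      (hF.differentiable (by norm_num) (x t)).hasFDerivAt
    have h := hFd.comp_hasDerivAt t (hderiv t ht)
    have he : fderiv ℝ F (x t) ((1 - α) • v t) = (1 - α) * dotp (v t) (grad F (x t)) := by
      rw [fderiv_eq_dotp, dotp_smul_left]
    rwa [he] at h
  set c : ℝ := (1 - α) * β with hcdef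
  have hψ : MonotoneOn (fun t => Real.exp (c * t) * (F (x t) - F xopt)) (Set.Icc 0 1) := by
    apply monotoneOn_of_hasDerivWithinAt_nonneg (convex_Icc 0 1)
      (f' := fun t => c * Real.exp (c * t) * (F (x t) - F xopt)
        + Real.exp (c * t) * ((1 - α) * dotp (v t) (grad F (x t))))
    · apply ContinuousOn.mul
      · exact (Real.continuous_exp.comp (continuous_const.mul continuous_id)).continuousOn
      · exact ContinuousOn.sub
          (fun t ht => ((hg t ht).continuousAt.continuousWithinAt)) continuousOn_const
    · intro t ht
      rw [interior_Icc] at ht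
      have hexp : HasDerivAt (fun t : ℝ => Real.exp (c * t)) (c * Real.exp (c * t)) t := by
        have h1 : HasDerivAt (fun t : ℝ => c * t) c t := by
          simpa using (hasDerivAt_id t).const_mul c
        have h2 := (Real.hasDerivAt_exp (c * t)).comp t h1
        simp only [Function.comp_def] at h2
        simpa [mul_comm] using h2
      exact (hexp.mul ((hg t ⟨ht.1.le, ht.2.le⟩).sub_const (F xopt))).hasDerivWithinAt
    · intro t ht
      rw [interior_Icc] at ht
      have ht' : t ∈ Set.Icc (0:ℝ) 1 := ⟨ht.1.le, ht.2.le⟩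
      have hcl := hclaim t ht'
      have h5 : 0 ≤ β * (F (x t) - F xopt) + dotp (v t) (grad F (x t)) := by nlinarith
      have heq : c * Real.exp (c * t) * (F (x t) - F xopt)
          + Real.exp (c * t) * ((1 - α) * dotp (v t) (grad F (x t)))
          = Real.exp (c * t) * (1 - α)
            * (β * (F (x t) - F xopt) + dotp (v t) (grad F (x t))) := by
        rw [hcdef]; ring
      rw [heq]
      exact mul_nonneg (mul_nonneg (Real.exp_pos _).le h1α.le) h5
  have h01 := hψ (Set.left_mem_Icc.2 (by norm_num)) (Set.right_mem_Icc.2 (by norm_num))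
    (by norm_num)
  simp only [mul_zero, Real.exp_zero, one_mul, mul_one] at h01
  have hg0 : 0 ≤ F (x 0) := by
    apply hFnn
    rw [hx0]
    apply box_mem_iff.2
    intro i
    have hb := box_mem_iff.1 hvstar_box i
    constructor
    · simpa using mul_nonneg hα0 hb.1
    · show α * vstar i ≤ 1
      nlinarith
  have h6 : -F xopt ≤ Real.exp c * (F (x 1) - F xopt) := by linarith
  have h7 := mul_le_mul_of_nonneg_left h6 (Real.exp_pos (-c)).le
  have h8 : Real.exp (-c) * (Real.exp c * (F (x 1) - F xopt)) = F (x 1) - F xopt := by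
    rw [← mul_assoc, ← Real.exp_add]
    norm_num
  rw [h8] at h7
  have hgoal : Real.exp (-((1 - α) * (α / (α + 1)) ^ (2 * σ))) = Real.exp (-c) := by
    rw [hcdef, hβdef]
  rw [hgoal]
  nlinarith [h7]
end

section
/- Let F : [0,1]^n → ℝ_{≥0} be a monotone one-sided σ-smooth C² function all of whose third-order partial derivatives are non-positive, and let P ⊆ [0,1]^n be a downward-closed compact convex polytope. Let v* ∈ argmax_{x∈P} ‖x‖₁ and OPT = max_{x∈P} F(x), and let α ∈ (0,1). Then for any x ∈ P with x ≥ α·v*, one has max_{v∈P} vᵀ∇F(x) ≥ (α/(α+σ))·(OPT − F(x)). -/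
open scoped BigOperators

theorem clm_expand_s5 {n : ℕ} {M : Type*} [AddCommMonoid M] [Module ℝ M] [TopologicalSpace M]
    (T : (Fin n → ℝ) →L[ℝ] M) (u : Fin n → ℝ) : T u = ∑ i, u i • T (Pi.single i 1) := by
  conv_lhs => rw [← Finset.univ_sum_single u]
  rw [map_sum]
  congr 1; funext i
  rw [show (Pi.single i (u i) : Fin n → ℝ) = u i • (Pi.single i (1:ℝ) : Fin n → ℝ) by
    funext j; by_cases h : j = i <;> simp [Pi.single_apply, h], map_smul]

theorem dotp_grad {n : ℕ} (F : (Fin n → ℝ) → ℝ) (y u : Fin n → ℝ) :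
    dotp u (grad F y) = fderiv ℝ F y u := by
  rw [clm_expand_s5 (fderiv ℝ F y) u]
  unfold dotp grad
  simp [smul_eq_mul]

theorem hess_eq {n : ℕ} (F : (Fin n → ℝ) → ℝ) (hF : ContDiff ℝ 3 F) (y : Fin n → ℝ)
    (i j : Fin n) :
    hess F y i j = fderiv ℝ (fderiv ℝ F) y (Pi.single j 1) (Pi.single i 1) := by
  have hD : ContDiff ℝ 2 (fderiv ℝ F) := hF.fderiv_right (by norm_num)
  have h : HasFDerivAt (fun z => fderiv ℝ F z (Pi.single i 1))
      ((ContinuousLinearMap.apply ℝ ℝ ((Pi.single i 1 : Fin n → ℝ))).comp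
        (fderiv ℝ (fderiv ℝ F) y)) y :=
    (ContinuousLinearMap.apply ℝ ℝ ((Pi.single i 1 : Fin n → ℝ))).hasFDerivAt.comp y
      (hD.differentiable (by norm_num) y).hasFDerivAt
  unfold hess grad
  rw [h.fderiv]
  rfl

theorem third_eq {n : ℕ} (F : (Fin n → ℝ) → ℝ) (hF : ContDiff ℝ 3 F) (y : Fin n → ℝ)
    (i j m : Fin n) :
    fderiv ℝ (fun z => hess F z i j) y (Pi.single m 1)
      = fderiv ℝ (fderiv ℝ (fderiv ℝ F)) y (Pi.single m 1) (Pi.single j 1) (Pi.single i 1) := by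
  have hD : ContDiff ℝ 2 (fderiv ℝ F) := hF.fderiv_right (by norm_num)
  have hD2 : ContDiff ℝ 1 (fderiv ℝ (fderiv ℝ F)) := hD.fderiv_right (by norm_num)
  set e2 : ((Fin n → ℝ) →L[ℝ] (Fin n → ℝ) →L[ℝ] ℝ) →L[ℝ] ℝ :=
    (ContinuousLinearMap.apply ℝ ℝ ((Pi.single i 1 : Fin n → ℝ))).comp
      (ContinuousLinearMap.apply ℝ ((Fin n → ℝ) →L[ℝ] ℝ) ((Pi.single j 1 : Fin n → ℝ))) with he2
  have hfun : (fun z => hess F z i j) = ⇑e2 ∘ (fderiv ℝ (fderiv ℝ F)) := by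
    funext z; rw [hess_eq F hF z i j]; rfl
  rw [hfun]
  have h : HasFDerivAt (⇑e2 ∘ (fderiv ℝ (fderiv ℝ F)))
      (e2.comp (fderiv ℝ (fderiv ℝ (fderiv ℝ F)) y)) y :=
    e2.hasFDerivAt.comp y (hD2.differentiable (by norm_num) y).hasFDerivAt
  rw [h.fderiv]
  rfl

theorem quad_eq {n : ℕ} (F : (Fin n → ℝ) → ℝ) (hF : ContDiff ℝ 3 F) (y u : Fin n → ℝ) :
    quadForm (hess F y) u = fderiv ℝ (fderiv ℝ F) y u u := by
  have h1 : fderiv ℝ (fderiv ℝ F) y u u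
      = ∑ j, u j * (fderiv ℝ (fderiv ℝ F) y (Pi.single j 1)) u := by
    conv_lhs => rw [clm_expand_s5 (fderiv ℝ (fderiv ℝ F) y) u]
    simp [ContinuousLinearMap.sum_apply, ContinuousLinearMap.smul_apply, smul_eq_mul]
  have h2 : ∀ j, (fderiv ℝ (fderiv ℝ F) y (Pi.single j 1)) u
      = ∑ i, u i * fderiv ℝ (fderiv ℝ F) y (Pi.single j 1) (Pi.single i 1) := by
    intro j
    rw [clm_expand_s5 (fderiv ℝ (fderiv ℝ F) y (Pi.single j 1)) u]
    simp [smul_eq_mul]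
  rw [h1]
  simp only [h2]
  unfold quadForm
  simp only [hess_eq F hF y]
  rw [Finset.sum_comm]
  refine Finset.sum_congr rfl fun j _ => ?_
  rw [Finset.mul_sum]
  exact Finset.sum_congr rfl fun i _ => by ring

theorem cube_nonpos {n : ℕ} (T : (Fin n → ℝ) →L[ℝ] (Fin n → ℝ) →L[ℝ] (Fin n → ℝ) →L[ℝ] ℝ)
    {u : Fin n → ℝ} (hu : 0 ≤ u)
    (hT : ∀ i j m : Fin n, T (Pi.single m 1) (Pi.single j 1) (Pi.single i 1) ≤ 0) :
    T u u u ≤ 0 := by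
  have e1 : T u u u = ∑ m, u m * (T (Pi.single m 1) u u) := by
    conv_lhs => rw [clm_expand_s5 T u]
    simp [ContinuousLinearMap.sum_apply, ContinuousLinearMap.smul_apply, smul_eq_mul]
  have e2 : ∀ m, T (Pi.single m 1) u u = ∑ j, u j * (T (Pi.single m 1) (Pi.single j 1) u) := by
    intro m
    conv_lhs => rw [clm_expand_s5 (T (Pi.single m 1)) u]
    simp [ContinuousLinearMap.sum_apply, ContinuousLinearMap.smul_apply, smul_eq_mul]
  have e3 : ∀ m j, T (Pi.single m 1) (Pi.single j 1) u
      = ∑ i, u i * T (Pi.single m 1) (Pi.single j 1) (Pi.single i 1) := by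
    intro m j
    rw [clm_expand_s5 (T (Pi.single m 1) (Pi.single j 1)) u]
    simp [smul_eq_mul]
  rw [e1]
  refine Finset.sum_nonpos fun m _ => ?_
  refine mul_nonpos_of_nonneg_of_nonpos (hu m) ?_
  rw [e2]
  refine Finset.sum_nonpos fun j _ => ?_
  refine mul_nonpos_of_nonneg_of_nonpos (hu j) ?_
  rw [e3]
  refine Finset.sum_nonpos fun i _ => ?_
  exact mul_nonpos_of_nonneg_of_nonpos (hu i) (hT i j m)

theorem mono_aux {f f' : ℝ → ℝ} (hf : ∀ t ∈ Set.Icc (0:ℝ) 1, HasDerivAt f (f' t) t)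
    (h0 : ∀ t ∈ Set.Icc (0:ℝ) 1, 0 ≤ f' t) : MonotoneOn f (Set.Icc 0 1) := by
  apply monotoneOn_of_deriv_nonneg (convex_Icc 0 1)
  · exact fun t ht => (hf t ht).continuousAt.continuousWithinAt
  · intro t ht
    rw [interior_Icc] at ht
    exact ((hf t (Set.mem_Icc_of_Ioo ht)).differentiableAt.differentiableWithinAt)
  · intro t ht
    rw [interior_Icc] at ht
    rw [(hf t (Set.mem_Icc_of_Ioo ht)).deriv]
    exact h0 t (Set.mem_Icc_of_Ioo ht)

/-- second part of Lemma 3.1: key gradient-progress bound for σ-OSS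
functions with non-positive third-order partial derivatives.  Let
`F : [0,1]^n → ℝ≥0` be monotone, one-sided σ-smooth, with all third-order partial
derivatives non-positive, `P` a downward-closed compact convex polytope in
`[0,1]^n`, `v* ∈ argmax_{x∈P} ‖x‖₁`, `OPT = max_{x∈P} F(x)`, and `α ∈ (0,1)`.
Then for any `x ∈ P` with `x ≥ α·v*`,
`max_{v∈P} vᵀ∇F(x) ≥ (α/(α+σ))·(OPT - F(x))`. -/
theorem stmt5 {n : ℕ} (σ α : ℝ) (hσ : 0 ≤ σ) (hα : α ∈ Set.Ioo (0 : ℝ) 1)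
    (F : (Fin n → ℝ) → ℝ) (hF : ContDiff ℝ 3 F)
    (hFnn : ∀ y ∈ box n, 0 ≤ F y)
    (hmono : ∀ y ∈ box n, ∀ z ∈ box n, y ≤ z → F y ≤ F z)
    (hOSS : ∀ y ∈ box n, y ≠ 0 → OSSAt σ F y)
    (hthird : ∀ y ∈ box n, ∀ i j m : Fin n,
      fderiv ℝ (fun z => hess F z i j) y (Pi.single m 1) ≤ 0)
    (P : Set (Fin n → ℝ)) (hPbox : P ⊆ box n) (hPconv : Convex ℝ P)
    (hPcomp : IsCompact P)
    (hPdc : ∀ y ∈ P, ∀ z : Fin n → ℝ, 0 ≤ z → z ≤ y → z ∈ P)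
    (vstar : Fin n → ℝ) (hvP : vstar ∈ P) (hvmax : ∀ y ∈ P, l1 y ≤ l1 vstar)
    (xopt : Fin n → ℝ) (hoptP : xopt ∈ P) (hopt : ∀ y ∈ P, F y ≤ F xopt)
    (x : Fin n → ℝ) (hxP : x ∈ P) (hxge : α • vstar ≤ x) :
    ∃ v ∈ P, α / (α + σ) * (F xopt - F x) ≤ dotp v (grad F x) := by
  obtain ⟨hα0, hα1⟩ := hα
  have hxbox := hPbox hxP
  have hoptbox := hPbox hoptP
  have hvbox := hPbox hvP
  have hx0 : ∀ i, 0 ≤ x i := fun i => hxbox.1 i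
  have hx1 : ∀ i, x i ≤ 1 := fun i => hxbox.2 i
  have hxopt0 : ∀ i, 0 ≤ xopt i := fun i => hoptbox.1 i
  have hxopt1 : ∀ i, xopt i ≤ 1 := fun i => hoptbox.2 i
  have hvstar0 : ∀ i, 0 ≤ vstar i := fun i => hvbox.1 i
  set u : Fin n → ℝ := fun i => max (xopt i) (x i) - x i with hu_def
  have hu0 : 0 ≤ u := fun i => by
    simp only [hu_def, Pi.zero_apply, sub_nonneg]; exact le_max_right _ _
  have huopt : u ≤ xopt := fun i => by
    simp only [hu_def, sub_le_iff_le_add]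
    exact max_le (le_add_of_nonneg_right (hx0 i)) (le_add_of_nonneg_left (hxopt0 i))
  have huP : u ∈ P := hPdc xopt hoptP u hu0 huopt
  by_cases htriv : F xopt - F x ≤ 0
  · refine ⟨0, hPdc x hxP 0 le_rfl hxbox.1, ?_⟩
    have : dotp (0 : Fin n → ℝ) (grad F x) = 0 := by simp [dotp]
    rw [this]
    exact mul_nonpos_of_nonneg_of_nonpos (div_nonneg hα0.le (by linarith)) htriv
  push_neg at htriv
  -- x ≠ 0
  have hxne : x ≠ 0 := by
    intro h0
    have hv0 : vstar = 0 := by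
      funext i
      have h := hxge i
      rw [h0] at h
      simp only [Pi.smul_apply, smul_eq_mul, Pi.zero_apply] at h
      show vstar i = 0
      have h1 : vstar i ≤ 0 := by nlinarith [hvstar0 i]
      linarith [hvstar0 i]
    have hlv : l1 vstar = 0 := by simp [l1, hv0]
    have hxo : l1 xopt ≤ 0 := hlv ▸ hvmax xopt hoptP
    have hxopt_zero : xopt = 0 := by
      funext i
      have hsum : ∑ j, |xopt j| = 0 :=
        le_antisymm hxo (Finset.sum_nonneg fun j _ => abs_nonneg _)
      have := (Finset.sum_eq_zero_iff_of_nonneg (fun j _ => abs_nonneg (xopt j))).1 hsum i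
        (Finset.mem_univ i)
      simpa [abs_eq_zero] using this
    rw [h0, hxopt_zero] at htriv
    linarith
  have hl1u0 : 0 ≤ l1 u := Finset.sum_nonneg fun i _ => abs_nonneg _
  have hl1x : 0 < l1 x := by
    rcases lt_or_eq_of_le (Finset.sum_nonneg fun i (_ : i ∈ Finset.univ) => abs_nonneg (x i)) with h | h
    · exact h
    · exfalso
      apply hxne
      funext i
      have := (Finset.sum_eq_zero_iff_of_nonneg (fun j _ => abs_nonneg (x j))).1 h.symm i
        (Finset.mem_univ i)
      simpa [abs_eq_zero] using this
  have hux : α * l1 u ≤ l1 x := by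
    have h1 : l1 u ≤ l1 xopt := Finset.sum_le_sum fun i _ => by
      rw [abs_of_nonneg (hu0 i), abs_of_nonneg (hxopt0 i)]; exact huopt i
    have h2 : l1 xopt ≤ l1 vstar := hvmax xopt hoptP
    have h3 : α * l1 vstar ≤ l1 x := by
      unfold l1
      rw [Finset.mul_sum]
      refine Finset.sum_le_sum fun i _ => ?_
      rw [abs_of_nonneg (hvstar0 i), abs_of_nonneg (hx0 i)]
      have := hxge i
      simpa using this
    calc α * l1 u ≤ α * l1 vstar := mul_le_mul_of_nonneg_left (h1.trans h2) hα0.le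
      _ ≤ l1 x := h3
  set r : ℝ := l1 u / l1 x with hr_def
  have hr0 : 0 ≤ r := div_nonneg hl1u0 hl1x.le
  have hαr : α * r ≤ 1 := by
    rw [hr_def, ← mul_div_assoc, div_le_one hl1x]
    exact hux
  -- line setup
  set L : ℝ → (Fin n → ℝ) := fun t => x + t • u with hL_def
  have hLbox : ∀ t ∈ Set.Icc (0:ℝ) 1, L t ∈ box n := by
    intro t ht
    constructor
    · intro i
      simp only [hL_def, Pi.add_apply, Pi.smul_apply, smul_eq_mul, Pi.zero_apply]
      exact add_nonneg (hx0 i) (mul_nonneg ht.1 (hu0 i))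
    · intro i
      simp only [hL_def, Pi.add_apply, Pi.smul_apply, smul_eq_mul, Pi.one_apply]
      have h1 : t * u i ≤ u i := by
        have := mul_le_mul_of_nonneg_right ht.2 (hu0 i); simpa using this
      have h2 : x i + u i ≤ 1 := by
        simp only [hu_def]
        have : x i + (max (xopt i) (x i) - x i) = max (xopt i) (x i) := by ring
        rw [this]
        exact max_le (hxopt1 i) (hx1 i)
      linarith
  have hLderiv : ∀ t : ℝ, HasDerivAt L u t := fun t => by
    have h := ((hasDerivAt_id t).smul_const u).const_add x
    rw [one_smul] at h
    exact h
  set g : ℝ → ℝ := fun t => F (L t) with hg_def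
  set g1 : ℝ → ℝ := fun t => fderiv ℝ F (L t) u with hg1_def
  set g2 : ℝ → ℝ := fun t => fderiv ℝ (fderiv ℝ F) (L t) u u with hg2_def
  set g3 : ℝ → ℝ := fun t => fderiv ℝ (fderiv ℝ (fderiv ℝ F)) (L t) u u u with hg3_def
  have hD : ContDiff ℝ 2 (fderiv ℝ F) := hF.fderiv_right (by norm_num)
  have hD2 : ContDiff ℝ 1 (fderiv ℝ (fderiv ℝ F)) := hD.fderiv_right (by norm_num)
  have hg : ∀ t, HasDerivAt g (g1 t) t := fun t =>
    ((hF.differentiable (by norm_num) (L t)).hasFDerivAt).comp_hasDerivAt t (hLderiv t)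
  have hg1 : ∀ t, HasDerivAt g1 (g2 t) t := fun t => by
    have h := ((ContinuousLinearMap.apply ℝ ℝ u).hasFDerivAt.comp (L t)
        (hD.differentiable (by norm_num) (L t)).hasFDerivAt).comp_hasDerivAt t (hLderiv t)
    exact h
  have hg2d : ∀ t, HasDerivAt g2 (g3 t) t := fun t => by
    have h := (((ContinuousLinearMap.apply ℝ ℝ u).comp
        (ContinuousLinearMap.apply ℝ ((Fin n → ℝ) →L[ℝ] ℝ) u)).hasFDerivAt.comp (L t)
        (hD2.differentiable (by norm_num) (L t)).hasFDerivAt).comp_hasDerivAt t (hLderiv t)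
    exact h
  have hg3le : ∀ t ∈ Set.Icc (0:ℝ) 1, g3 t ≤ 0 := by
    intro t ht
    refine cube_nonpos _ hu0 fun i j m => ?_
    rw [← third_eq F hF (L t) i j m]
    exact hthird (L t) (hLbox t ht) i j m
  have hg2anti : ∀ t ∈ Set.Icc (0:ℝ) 1, g2 t ≤ g2 0 := by
    intro t ht
    have hmon := mono_aux (f := fun s => -g2 s) (f' := fun s => -g3 s)
      (fun s _ => (hg2d s).neg) (fun s hs => neg_nonneg.2 (hg3le s hs))
    have := hmon (Set.left_mem_Icc.2 zero_le_one) ht ht.1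
    simpa using this
  have step1 : ∀ t ∈ Set.Icc (0:ℝ) 1, g1 t ≤ g1 0 + g2 0 * t := by
    intro t ht
    have hφ : ∀ s : ℝ, HasDerivAt (fun w => g1 0 + g2 0 * w - g1 w) (g2 0 - g2 s) s := by
      intro s
      have h := (((hasDerivAt_id s).const_mul (g2 0)).const_add (g1 0)).sub (hg1 s)
      rw [mul_one] at h
      exact h
    have hmon := mono_aux (f := fun w => g1 0 + g2 0 * w - g1 w) (f' := fun s => g2 0 - g2 s)
      (fun s _ => hφ s) (fun s hs => by show (0:ℝ) ≤ g2 0 - g2 s; linarith [hg2anti s hs])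
    have := hmon (Set.left_mem_Icc.2 zero_le_one) ht ht.1
    simp only at this
    linarith
  have step2 : g 1 ≤ g 0 + g1 0 + g2 0 / 2 := by
    have hψ : ∀ s : ℝ, HasDerivAt (fun w => g 0 + g1 0 * w + g2 0 / 2 * w ^ 2 - g w)
        (g1 0 + g2 0 * s - g1 s) s := by
      intro s
      have h := ((((hasDerivAt_id s).const_mul (g1 0)).const_add (g 0)).add
        ((hasDerivAt_pow 2 s).const_mul (g2 0 / 2))).sub (hg s)
      have e : g1 0 * 1 + g2 0 / 2 * ((2:ℕ) * s ^ (2 - 1)) - g1 s = g1 0 + g2 0 * s - g1 s := by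
        rw [show (2:ℕ) - 1 = 1 from rfl]
        ring
      rw [e] at h
      exact h
    have hmon := mono_aux (f := fun w => g 0 + g1 0 * w + g2 0 / 2 * w ^ 2 - g w)
      (f' := fun s => g1 0 + g2 0 * s - g1 s)
      (fun s _ => hψ s) (fun s hs => by show (0:ℝ) ≤ g1 0 + g2 0 * s - g1 s; linarith [step1 s hs])
    have := hmon (Set.left_mem_Icc.2 zero_le_one) (Set.right_mem_Icc.2 zero_le_one) zero_le_one
    simp only at this
    nlinarith [this]
  -- identifications
  have hL0 : L 0 = x := by simp [hL_def]
  have hg10 : g1 0 = dotp u (grad F x) := by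
    show (fderiv ℝ F (L 0)) u = _
    rw [hL0]
    exact (dotp_grad F x u).symm
  have hg00 : g 0 = F x := by show F (L 0) = F x; rw [hL0]
  -- OSS at x
  have hoss := hOSS x hxbox hxne u hu0
  have hB : g2 0 / 2 ≤ σ * r * g1 0 := by
    have hg20 : g2 0 = quadForm (hess F x) u := by
      show (fderiv ℝ (fderiv ℝ F) (L 0)) u u = _
      rw [hL0]
      exact (quad_eq F hF x u).symm
    rw [hg20, hg10, hr_def]
    linarith [hoss]
  -- F xopt ≤ g 1
  have hFopt : F xopt ≤ g 1 := by
    have h1box : L 1 ∈ box n := hLbox 1 (Set.right_mem_Icc.2 zero_le_one)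
    have hle : xopt ≤ L 1 := by
      intro i
      simp only [hL_def, Pi.add_apply, Pi.smul_apply, smul_eq_mul, one_mul, hu_def]
      have : x i + (max (xopt i) (x i) - x i) = max (xopt i) (x i) := by ring
      rw [this]
      exact le_max_left _ _
    exact hmono xopt hoptbox (L 1) h1box hle
  have hΔ : F xopt - F x ≤ g1 0 + σ * r * g1 0 := by linarith
  have hg1nn : 0 ≤ g1 0 := by nlinarith [mul_nonneg hσ hr0]
  refine ⟨u, huP, ?_⟩
  rw [← hg10]
  have hαs : 0 < α + σ := by linarith
  rw [div_mul_eq_mul_div, div_le_iff₀ hαs]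
  nlinarith [mul_le_mul_of_nonneg_right hαr (mul_nonneg hσ hg1nn),
    mul_le_mul_of_nonneg_left hΔ hα0.le]
end

section
/- Let F : [0,1]^n → ℝ be a monotone, non-negative C² function and P ⊆ [0,1]^n a downward-closed compact convex polytope with v* ∈ argmax_{x∈P} ‖x‖₁, OPT = max_{x∈P} F(x), and α ∈ (0,1). Assume: (i) there is μ ∈ (0,1] such that for every x ∈ P with x ≥ α·v*, max_{v∈P} vᵀ∇F(x) ≥ μ·(OPT − F(x)); and (ii) F is η-local, i.e., for all x, u and ε ∈ [0,1] with x + εu ∈ P and 1 − ηε ∈ [0,1], uᵀ∇F(x + εu) ≥ (1 − ηε)·uᵀ∇F(x). Let δ > 0 with 1/δ ∈ ℕ and δ ≤ min{1/(nη(1−α)), 1/((1−α)μ)}, and define the discrete greedy iterates x⁰ = α·v*, x^{t+δ} = x^t + δ(1−α)·v_max(x^t), where v_max(x) ∈ argmax_{v∈P} vᵀ∇F(x). Then F(x¹) ≥ (1 − exp(−(1−α)μ))·(1 − ηδ(1−α))·OPT. -/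
open scoped BigOperators

lemma clm_apply_eq_sum {n : ℕ} (L : (Fin n → ℝ) →L[ℝ] ℝ) (u : Fin n → ℝ) :
    L u = ∑ i, u i * L (Pi.single i 1) := by
  have h : u = ∑ i, u i • (Pi.single i 1 : Fin n → ℝ) := by
    funext j
    simp [Pi.single_apply]
  conv_lhs => rw [h]
  rw [map_sum]
  simp [smul_eq_mul]

lemma hasDerivAt_line {n : ℕ} {F : (Fin n → ℝ) → ℝ} (hF : ContDiff ℝ 2 F)
    (x u : Fin n → ℝ) (t : ℝ) :
    HasDerivAt (fun s : ℝ => F (x + s • u)) (dotp u (grad F (x + t • u))) t := by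
  have hd : Differentiable ℝ F := hF.differentiable (by norm_num)
  have h1 : HasDerivAt (fun s : ℝ => x + s • u) u t := by
    simpa using ((hasDerivAt_id t).smul_const u).const_add x
  have h3 := (hd (x + t • u)).hasFDerivAt.comp_hasDerivAt t h1
  refine h3.congr_deriv (Eq.symm ?_)
  simp only [dotp, grad]
  exact (clm_apply_eq_sum _ u).symm

lemma line_gain {n : ℕ} {F : (Fin n → ℝ) → ℝ} (hF : ContDiff ℝ 2 F)
    (x u : Fin n → ℝ) (ε C : ℝ) (hε : 0 < ε)
    (hC : ∀ t ∈ Set.Ioo (0:ℝ) ε, C ≤ dotp u (grad F (x + t • u))) :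
    ε * C ≤ F (x + ε • u) - F x := by
  set ψ := fun t : ℝ => F (x + t • u) - C * t with hψ
  have hder : ∀ t : ℝ, HasDerivAt ψ (dotp u (grad F (x + t • u)) - C) t := by
    intro t
    have h2 : HasDerivAt (fun s : ℝ => C * s) C t := by
      simpa using (hasDerivAt_id t).const_mul C
    exact (hasDerivAt_line hF x u t).sub h2
  have hmono : MonotoneOn ψ (Set.Icc 0 ε) := by
    apply monotoneOn_of_deriv_nonneg (convex_Icc 0 ε)
    · exact fun t _ => (hder t).continuousAt.continuousWithinAt
    · exact fun t _ => (hder t).differentiableAt.differentiableWithinAt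
    · intro t ht
      rw [interior_Icc] at ht
      rw [(hder t).deriv]
      have := hC t ht
      linarith
  have h := hmono (Set.left_mem_Icc.2 hε.le) (Set.right_mem_Icc.2 hε.le) hε.le
  simp only [hψ, zero_smul, add_zero, mul_zero, sub_zero] at h
  have : C * ε = ε * C := mul_comm _ _
  linarith

set_option maxHeartbeats 1600000 in

/-- Theorem `discretize_eta`: discretized jump-start greedy for
η-local functions with a μ-bound.  `F : [0,1]^n → ℝ` monotone, non-negative, C²;
`P ⊆ [0,1]^n` downward-closed compact convex; `v* ∈ argmax_{x∈P} ‖x‖₁`;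
`OPT = max_{x∈P} F`; `α ∈ (0,1)`; (i) `μ ∈ (0,1]` with
`max_{v∈P} vᵀ∇F(x) ≥ μ(OPT - F x)` whenever `x ∈ P`, `x ≥ α v*`; (ii) `F` η-local.
With step size `δ > 0`, `1/δ = N ∈ ℕ`, `δ ≤ min{1/(nη(1-α)), 1/((1-α)μ)}`
(encoded as `δ·nη(1-α) ≤ 1` and `δ·(1-α)μ ≤ 1`), and iterates `x⁰ = α v*`,
`x^{k+1} = x^k + δ(1-α)·v_max(x^k)`, the output satisfies
`F(x¹) ≥ (1 - exp(-(1-α)μ))·(1 - ηδ(1-α))·OPT`. -/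
theorem stmt6 {n : ℕ} (α μ η δ : ℝ) (N : ℕ)
    (hα : α ∈ Set.Ioo (0 : ℝ) 1) (hμ : μ ∈ Set.Ioc (0 : ℝ) 1) (hη : 0 ≤ η)
    (hδ : 0 < δ) (hδN : δ * N = 1)
    (hδ1 : δ * ((n : ℝ) * η * (1 - α)) ≤ 1) (hδ2 : δ * ((1 - α) * μ) ≤ 1)
    (F : (Fin n → ℝ) → ℝ) (hF : ContDiff ℝ 2 F)
    (hFnn : ∀ y ∈ box n, 0 ≤ F y)
    (hmono : ∀ y ∈ box n, ∀ z ∈ box n, y ≤ z → F y ≤ F z)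
    (P : Set (Fin n → ℝ)) (hPbox : P ⊆ box n) (hPconv : Convex ℝ P)
    (hPcomp : IsCompact P)
    (hPdc : ∀ y ∈ P, ∀ z : Fin n → ℝ, 0 ≤ z → z ≤ y → z ∈ P)
    (vstar : Fin n → ℝ) (hvP : vstar ∈ P) (hvmax : ∀ y ∈ P, l1 y ≤ l1 vstar)
    (xopt : Fin n → ℝ) (hoptP : xopt ∈ P) (hopt : ∀ y ∈ P, F y ≤ F xopt)
    (hmu : ∀ x ∈ P, α • vstar ≤ x → ∃ v ∈ P, μ * (F xopt - F x) ≤ dotp v (grad F x))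
    (hlocal : ∀ (x u : Fin n → ℝ) (ε : ℝ), ε ∈ Set.Icc (0 : ℝ) 1 →
      x + ε • u ∈ P → (1 - η * ε) ∈ Set.Icc (0 : ℝ) 1 →
      (1 - η * ε) * dotp u (grad F x) ≤ dotp u (grad F (x + ε • u)))
    (vmax : (Fin n → ℝ) → Fin n → ℝ)
    (xs : ℕ → Fin n → ℝ) (hxs0 : xs 0 = α • vstar)
    (hvmaxP : ∀ k < N, vmax (xs k) ∈ P ∧
      ∀ w ∈ P, dotp w (grad F (xs k)) ≤ dotp (vmax (xs k)) (grad F (xs k)))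
    (hstep : ∀ k < N, xs (k + 1) = xs k + (δ * (1 - α)) • vmax (xs k)) :
    (1 - Real.exp (-((1 - α) * μ))) * (1 - η * δ * (1 - α)) * F xopt ≤ F (xs N) := by
  have h1α : (0:ℝ) < 1 - α := by linarith [hα.2]
  have h0P : (0 : Fin n → ℝ) ∈ P := hPdc vstar hvP 0 le_rfl (hPbox hvP).1
  have hN1 : 1 ≤ N := by
    rcases Nat.eq_zero_or_pos N with h | h
    · subst h; simp at hδN
    · exact h
  have hδle1 : δ ≤ 1 := by
    have h1 : (1:ℝ) ≤ (N:ℝ) := by exact_mod_cast hN1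
    nlinarith
  -- structure invariant
  have inv : ∀ k, k ≤ N → ∃ y ∈ P, xs k = α • vstar + ((1 - α) * ((k:ℝ) * δ)) • y := by
    intro k
    induction k with
    | zero => intro _; exact ⟨vstar, hvP, by simp [hxs0]⟩
    | succ k ih =>
      intro hk
      have hkN : k < N := Nat.lt_of_succ_le hk
      obtain ⟨y, hyP, hy⟩ := ih hkN.le
      obtain ⟨hvP', _⟩ := hvmaxP k hkN
      have hk1 : (0:ℝ) < (k:ℝ) + 1 := by positivity
      refine ⟨((k:ℝ)/((k:ℝ)+1)) • y + (1/((k:ℝ)+1)) • vmax (xs k),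
        hPconv hyP hvP' (by positivity) (by positivity) (by field_simp), ?_⟩
      have e1 : (1-α)*((((k:ℕ):ℝ)+1)*δ) * ((k:ℝ)/((k:ℝ)+1)) = (1-α)*((k:ℝ)*δ) := by
        field_simp
      have e2 : (1-α)*((((k:ℕ):ℝ)+1)*δ) * (1/((k:ℝ)+1)) = δ*(1-α) := by
        field_simp
      rw [hstep k hkN, hy, smul_add, smul_smul, smul_smul]
      push_cast
      rw [e1, e2, add_assoc]
  -- membership and domination
  have hmemP : ∀ k, k ≤ N → xs k ∈ P ∧ α • vstar ≤ xs k := by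
    intro k hk
    obtain ⟨y, hyP, hy⟩ := inv k hk
    have hy0 : (0:Fin n → ℝ) ≤ y := (hPbox hyP).1
    have hkδ0 : 0 ≤ (k:ℝ)*δ := mul_nonneg (Nat.cast_nonneg k) hδ.le
    have hkδ1 : (k:ℝ)*δ ≤ 1 := by
      have hc : (k:ℝ) ≤ (N:ℝ) := by exact_mod_cast hk
      nlinarith
    have hw : ((k:ℝ)*δ) • y ∈ P := by
      have h := hPconv hyP h0P (a := (k:ℝ)*δ) (b := 1 - (k:ℝ)*δ) hkδ0 (by linarith) (by ring)
      simpa using h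
    constructor
    · have hmem := hPconv hvP hw (a := α) (b := 1 - α) hα.1.le (by linarith) (by ring)
      have heq : ((1-α)*((k:ℝ)*δ)) • y = (1-α) • (((k:ℝ)*δ) • y) := (smul_smul _ _ _).symm
      rw [hy, heq]; exact hmem
    · rw [hy, Pi.le_def]
      intro i
      have hnn : 0 ≤ (1-α)*((k:ℝ)*δ) * y i :=
        mul_nonneg (mul_nonneg h1α.le hkδ0) (hy0 i)
      simp only [Pi.add_apply, Pi.smul_apply, smul_eq_mul]
      linarith
  set ε := δ * (1 - α) with hε_def
  have hε0 : 0 < ε := mul_pos hδ h1α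
  have hε1 : ε ≤ 1 := by
    have h : δ * (1-α) ≤ δ * 1 := by nlinarith [hα.1]
    rw [hε_def]; linarith
  have hεμ1 : ε * μ ≤ 1 := by
    have h : ε * μ = δ * ((1-α)*μ) := by rw [hε_def]; ring
    linarith
  have hεμ0 : 0 ≤ ε * μ := mul_nonneg hε0.le hμ.1.le
  set T := F xopt with hT_def
  have hT0 : 0 ≤ T := hFnn xopt (hPbox hoptP)
  set E := Real.exp (-((1 - α) * μ)) with hE_def
  have hE1 : E < 1 := by
    rw [hE_def]
    apply Real.exp_lt_one_iff.2
    nlinarith [hμ.1]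
  set β := 1 - η * ε with hβ_def
  have hβeq : (1:ℝ) - η * δ * (1 - α) = β := by rw [hβ_def, hε_def]; ring
  have hFN0 : 0 ≤ F (xs N) := hFnn (xs N) (hPbox (hmemP N le_rfl).1)
  rcases lt_or_ge β 0 with hβneg | hβpos
  · -- degenerate case: β < 0, RHS ≤ 0
    have h1 : 0 ≤ (1-E)*T := mul_nonneg (by linarith) hT0
    rw [hβeq]
    nlinarith
  · -- main case
    have hβ1 : β ≤ 1 := by
      have h := mul_nonneg hη hε0.le
      rw [hβ_def]; linarith
    have hηε1 : η * ε ≤ 1 := by rw [hβ_def] at hβpos; linarith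
    have key : ∀ k, k ≤ N → (1 - (1 - ε*μ)^k) * β * T ≤ F (xs k) := by
      intro k
      induction k with
      | zero =>
        intro _
        have h := hFnn (xs 0) (hPbox (hmemP 0 (Nat.zero_le N)).1)
        simpa using h
      | succ k ih =>
        intro hk
        have hkN : k < N := Nat.lt_of_succ_le hk
        have ihk := ih hkN.le
        obtain ⟨hxP, hxge⟩ := hmemP k hkN.le
        obtain ⟨hvmP, hvmx⟩ := hvmaxP k hkN
        obtain ⟨v, hvP', hvG⟩ := hmu (xs k) hxP hxge
        have hGv : μ * (T - F (xs k)) ≤ dotp (vmax (xs k)) (grad F (xs k)) :=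
          le_trans hvG (hvmx v hvP')
        have hFk_le : F (xs k) ≤ T := hopt (xs k) hxP
        have hG0 : 0 ≤ dotp (vmax (xs k)) (grad F (xs k)) :=
          le_trans (mul_nonneg hμ.1.le (by linarith)) hGv
        have hx1P : xs (k+1) ∈ P := (hmemP (k+1) hk).1
        have hstepk : xs (k + 1) = xs k + ε • vmax (xs k) := by
          rw [hε_def]; exact hstep k hkN
        have hseg : ∀ t ∈ Set.Ioo (0:ℝ) ε,
            β * dotp (vmax (xs k)) (grad F (xs k)) ≤
              dotp (vmax (xs k)) (grad F (xs k + t • vmax (xs k))) := by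
          intro t ht
          have ht0 : 0 ≤ t := ht.1.le
          have htε : t ≤ ε := ht.2.le
          have hd1 : 0 ≤ t/ε := div_nonneg ht0 hε0.le
          have hd2 : t/ε ≤ 1 := (div_le_one hε0).2 htε
          have hmem : xs k + t • vmax (xs k) ∈ P := by
            have hm := hPconv hxP hx1P (by linarith : (0:ℝ) ≤ 1 - t/ε) hd1 (by ring)
            rw [hstepk] at hm
            have hxcomb : (1 - t/ε) • xs k + (t/ε) • (xs k + ε • vmax (xs k))
                = xs k + t • vmax (xs k) := by
              rw [smul_add, smul_smul, div_mul_cancel₀ t hε0.ne']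
              funext i
              simp only [Pi.add_apply, Pi.smul_apply, smul_eq_mul]
              ring
            rw [hxcomb] at hm
            exact hm
          have hηt : η * t ≤ η * ε := mul_le_mul_of_nonneg_left htε hη
          have hηt0 : 0 ≤ η * t := mul_nonneg hη ht0
          have hloc := hlocal (xs k) (vmax (xs k)) t ⟨ht0, le_trans htε hε1⟩ hmem
            ⟨by linarith, by linarith⟩
          have hβle : β ≤ 1 - η * t := by rw [hβ_def]; linarith
          have hmm : β * dotp (vmax (xs k)) (grad F (xs k)) ≤
              (1 - η * t) * dotp (vmax (xs k)) (grad F (xs k)) :=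
            mul_le_mul_of_nonneg_right hβle hG0
          exact le_trans hmm hloc
        have hgain := line_gain hF (xs k) (vmax (xs k)) ε
          (β * dotp (vmax (xs k)) (grad F (xs k))) hε0 hseg
        rw [← hstepk] at hgain
        have hstep_ineq : F (xs k) + ε * β * (μ * (T - F (xs k))) ≤ F (xs (k+1)) := by
          have hεβ : 0 ≤ ε * β := mul_nonneg hε0.le hβpos
          have h1 : ε * β * (μ * (T - F (xs k))) ≤
              ε * β * dotp (vmax (xs k)) (grad F (xs k)) :=
            mul_le_mul_of_nonneg_left hGv hεβ
          have h2 : ε * (β * dotp (vmax (xs k)) (grad F (xs k))) =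
              ε * β * dotp (vmax (xs k)) (grad F (xs k)) := by ring
          linarith
        have hεβ0 : 0 ≤ ε * β := mul_nonneg hε0.le hβpos
        have hεβμ0 : 0 ≤ ε * β * μ := mul_nonneg hεβ0 hμ.1.le
        have hεβμ1 : ε * β * μ ≤ 1 := by nlinarith [hμ.1, hμ.2, hε0.le, hβpos, hε1, hβ1]
        have hqk0 : 0 ≤ (1 - ε*μ)^k := pow_nonneg (by linarith) k
        have hqk1 : (1 - ε*μ)^k ≤ 1 := pow_le_one₀ (by linarith) (by linarith)
        have hint1 : (1 - ε*β*μ) * ((1 - (1 - ε*μ)^k) * β * T) ≤ (1 - ε*β*μ) * F (xs k) :=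
          mul_le_mul_of_nonneg_left ihk (by linarith)
        have hd : 0 ≤ ε*μ*β*T*(1-β)*(1-(1 - ε*μ)^k) :=
          mul_nonneg (mul_nonneg (mul_nonneg (mul_nonneg hεμ0 hβpos) hT0)
            (by linarith)) (by linarith)
        have hkey : (1 - (1 - ε*μ)^(k+1)) * β * T
            ≤ (1 - ε*β*μ) * ((1 - (1 - ε*μ)^k) * β * T) + ε*β*μ*T := by
          rw [pow_succ]
          nlinarith [hd]
        linarith [hkey, hint1, hstep_ineq]
    have hfin := key N le_rfl
    have hqN : (1 - ε*μ) ^ N ≤ E := by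
      have h1 : 1 - ε*μ ≤ Real.exp (-(ε*μ)) := by
        have h := Real.add_one_le_exp (-(ε*μ))
        linarith
      have h2 : (1 - ε*μ)^N ≤ Real.exp (-(ε*μ))^N := pow_le_pow_left₀ (by linarith) h1 N
      have h3 : Real.exp (-(ε*μ))^N = E := by
        rw [← Real.exp_nat_mul, hE_def]
        congr 1
        rw [hε_def]
        linear_combination (-(1-α)*μ) * hδN
      rw [← h3]; exact h2
    have hmul : (1 - E) * β * T ≤ (1 - (1 - ε*μ)^N) * β * T := by
      apply mul_le_mul_of_nonneg_right _ hT0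
      apply mul_le_mul_of_nonneg_right _ hβpos
      linarith
    rw [hβeq]
    linarith
end

section
/- Let f : 2^[n] → ℝ_{≥0} be a non-negative monotone set function (f(S) ≤ f(T) whenever S ⊆ T) and F its multilinear extension. Let P ⊆ [0,1]^n be a downward-closed compact convex polytope with v* ∈ argmax_{x∈P} ‖x‖₁, OPT = max_{x∈P} F(x), and α ∈ (0,1). Assume there is μ ∈ (0,1] such that for every x ∈ P with x ≥ α·v*, max_{v∈P} vᵀ∇F(x) ≥ μ·(OPT − F(x)). Let δ > 0 with 1/δ ∈ ℕ and δ ≤ min{(1−α)/n³, 1/((1−α)μ)}, and define iterates x⁰ = α·v*, x^{t+δ} = x^t + δ(1−α)·v_max(x^t) for t = 0, δ, 2δ, …, 1−δ, where v_max(x) ∈ argmax_{v∈P} vᵀ∇F(x). Then F(x¹) ≥ (1 − exp(−(1/2)(1−α)μ))·(1 − n²δ/(1−α))·OPT. -/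
open scoped BigOperators

/-- The multilinear extension of a set function `f : 2^[n] → ℝ`. -/
noncomputable def mlext {n : ℕ} (f : Finset (Fin n) → ℝ) (x : Fin n → ℝ) : ℝ :=
  ∑ S : Finset (Fin n), f S * ((∏ i ∈ S, x i) * ∏ i ∈ Sᶜ, (1 - x i))

/-- subsets avoiding `i` -/
def BB (n : ℕ) (i : Fin n) : Finset (Finset (Fin n)) :=
  ((Finset.univ : Finset (Fin n)).erase i).powerset

noncomputable def qw {n : ℕ} (i : Fin n) (T : Finset (Fin n)) (w : Fin n → ℝ) : ℝ :=
  (∏ k ∈ T, w k) * ∏ k ∈ Tᶜ.erase i, (1 - w k)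

noncomputable def pd {n : ℕ} (f : Finset (Fin n) → ℝ) (i : Fin n) (w : Fin n → ℝ) : ℝ :=
  ∑ T ∈ BB n i, (f (insert i T) - f T) * qw i T w

lemma mem_BB {n : ℕ} {i : Fin n} {T : Finset (Fin n)} (hT : T ∈ BB n i) : i ∉ T := by
  have := Finset.mem_powerset.mp hT
  exact (Finset.subset_erase.mp this).2

lemma mlext_update {n : ℕ} (f : Finset (Fin n) → ℝ) (w : Fin n → ℝ) (i : Fin n) (a : ℝ) :
    mlext f (Function.update w i a) =
      (∑ T ∈ BB n i, f T * qw i T w) + a * pd f i w := by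
  classical
  set u := Function.update w i a with hu
  have hui : u i = a := Function.update_self i a w
  have huk : ∀ k, k ≠ i → u k = w k := fun k hk => Function.update_of_ne hk a w
  have hins : i ∉ (Finset.univ : Finset (Fin n)).erase i := Finset.notMem_erase i _
  have hsplit : ∀ g : Finset (Fin n) → ℝ,
      ∑ S : Finset (Fin n), g S = ∑ T ∈ BB n i, g T + ∑ T ∈ BB n i, g (insert i T) := by
    intro g
    have h1 : ∑ S : Finset (Fin n), g S
        = ∑ S ∈ ((insert i ((Finset.univ : Finset (Fin n)).erase i))).powerset, g S := by
      rw [Finset.insert_erase (Finset.mem_univ i), Finset.powerset_univ]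
    rw [h1, Finset.sum_powerset_insert hins]
    rfl
  rw [mlext, hsplit]
  have e1 : ∀ T ∈ BB n i,
      f T * ((∏ k ∈ T, u k) * ∏ k ∈ Tᶜ, (1 - u k)) = (1 - a) * (f T * qw i T w) := by
    intro T hT
    have hiT : i ∉ T := mem_BB hT
    have hp1 : (∏ k ∈ T, u k) = ∏ k ∈ T, w k :=
      Finset.prod_congr rfl fun k hk => huk k (by rintro rfl; exact hiT hk)
    have hiTc : i ∈ Tᶜ := Finset.mem_compl.mpr hiT
    have hp2 : (∏ k ∈ Tᶜ, (1 - u k)) = (1 - a) * ∏ k ∈ Tᶜ.erase i, (1 - w k) := by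
      rw [← Finset.mul_prod_erase Tᶜ (fun k => 1 - u k) hiTc, hui]
      congr 1
      exact Finset.prod_congr rfl fun k hk => by
        rw [huk k (Finset.ne_of_mem_erase hk)]
    rw [hp1, hp2, qw]; ring
  have e2 : ∀ T ∈ BB n i,
      f (insert i T) * ((∏ k ∈ insert i T, u k) * ∏ k ∈ (insert i T)ᶜ, (1 - u k))
        = a * (f (insert i T) * qw i T w) := by
    intro T hT
    have hiT : i ∉ T := mem_BB hT
    have hp1 : (∏ k ∈ insert i T, u k) = a * ∏ k ∈ T, w k := by
      rw [Finset.prod_insert hiT, hui]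
      congr 1
      exact Finset.prod_congr rfl fun k hk => huk k (by rintro rfl; exact hiT hk)
    have hp2 : (∏ k ∈ (insert i T)ᶜ, (1 - u k)) = ∏ k ∈ Tᶜ.erase i, (1 - w k) := by
      rw [Finset.compl_insert]
      exact Finset.prod_congr rfl fun k hk => by
        rw [huk k (Finset.ne_of_mem_erase hk)]
    rw [hp1, hp2, qw]; ring
  rw [Finset.sum_congr rfl e1, Finset.sum_congr rfl e2, ← Finset.mul_sum, ← Finset.mul_sum, pd]
  have h3 : ∑ T ∈ BB n i, (f (insert i T) - f T) * qw i T w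
      = ∑ T ∈ BB n i, f (insert i T) * qw i T w - ∑ T ∈ BB n i, f T * qw i T w := by
    rw [← Finset.sum_sub_distrib]
    exact Finset.sum_congr rfl fun T _ => by ring
  rw [h3]; ring

lemma mlext_update_sub {n : ℕ} (f : Finset (Fin n) → ℝ) (w : Fin n → ℝ) (i : Fin n) (a b : ℝ) :
    mlext f (Function.update w i a) - mlext f (Function.update w i b) = (a - b) * pd f i w := by
  rw [mlext_update, mlext_update]; ring
lemma qw_nonneg {n : ℕ} (i : Fin n) (T : Finset (Fin n)) (w : Fin n → ℝ)
    (hw0 : ∀ j, 0 ≤ w j) (hw1 : ∀ j, w j ≤ 1) : 0 ≤ qw i T w :=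
  mul_nonneg (Finset.prod_nonneg fun k _ => hw0 k)
    (Finset.prod_nonneg fun k _ => by linarith [hw1 k])

lemma pd_nonneg {n : ℕ} (f : Finset (Fin n) → ℝ)
    (hfmono : ∀ S T : Finset (Fin n), S ⊆ T → f S ≤ f T) (i : Fin n) (w : Fin n → ℝ)
    (hw0 : ∀ j, 0 ≤ w j) (hw1 : ∀ j, w j ≤ 1) : 0 ≤ pd f i w :=
  Finset.sum_nonneg fun T _ => mul_nonneg
    (by linarith [hfmono T (insert i T) (Finset.subset_insert i T)])
    (qw_nonneg i T w hw0 hw1)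

lemma pd_mono {n : ℕ} (f : Finset (Fin n) → ℝ)
    (hfmono : ∀ S T : Finset (Fin n), S ⊆ T → f S ≤ f T) (i : Fin n) (r : ℝ)
    (x w : Fin n → ℝ) (hr0 : 0 ≤ r) (hr1 : r ≤ 1)
    (hx0 : ∀ j, 0 ≤ x j) (hxw : ∀ j, x j ≤ w j) (hw1 : ∀ j, w j ≤ 1)
    (hrw : ∀ j, r * (1 - x j) ≤ 1 - w j) :
    r ^ (n - 1) * pd f i x ≤ pd f i w := by
  rw [pd, pd, Finset.mul_sum]
  apply Finset.sum_le_sum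
  intro T _
  have hdf : 0 ≤ f (insert i T) - f T := by
    linarith [hfmono T (insert i T) (Finset.subset_insert i T)]
  have hx1 : ∀ j, x j ≤ 1 := fun j => le_trans (hxw j) (hw1 j)
  have key : r ^ (n - 1) * qw i T x ≤ qw i T w := by
    rw [qw, qw]
    have hP1 : (∏ k ∈ T, x k) ≤ ∏ k ∈ T, w k :=
      Finset.prod_le_prod (fun k _ => hx0 k) (fun k _ => hxw k)
    have hP1x : 0 ≤ ∏ k ∈ T, x k := Finset.prod_nonneg fun k _ => hx0 k
    have hP1w : 0 ≤ ∏ k ∈ T, w k := Finset.prod_nonneg fun k _ => le_trans (hx0 k) (hxw k)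
    have hP2 : ∏ k ∈ Tᶜ.erase i, (r * (1 - x k)) ≤ ∏ k ∈ Tᶜ.erase i, (1 - w k) :=
      Finset.prod_le_prod (fun k _ => mul_nonneg hr0 (by linarith [hx1 k])) (fun k _ => hrw k)
    rw [Finset.prod_mul_distrib, Finset.prod_const] at hP2
    have hcard : (Tᶜ.erase i).card ≤ n - 1 := by
      have hsub : Tᶜ.erase i ⊆ (Finset.univ : Finset (Fin n)).erase i :=
        Finset.erase_subset_erase i (Finset.subset_univ _)
      calc (Tᶜ.erase i).card ≤ ((Finset.univ : Finset (Fin n)).erase i).card :=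
            Finset.card_le_card hsub
        _ = n - 1 := by
            rw [Finset.card_erase_of_mem (Finset.mem_univ i), Finset.card_univ, Fintype.card_fin]
    have hpow : r ^ (n - 1) ≤ r ^ (Tᶜ.erase i).card := pow_le_pow_of_le_one hr0 hr1 hcard
    have hP2x : 0 ≤ ∏ k ∈ Tᶜ.erase i, (1 - x k) :=
      Finset.prod_nonneg fun k _ => by linarith [hx1 k]
    calc r ^ (n - 1) * ((∏ k ∈ T, x k) * ∏ k ∈ Tᶜ.erase i, (1 - x k))
        ≤ r ^ (Tᶜ.erase i).card * ((∏ k ∈ T, x k) * ∏ k ∈ Tᶜ.erase i, (1 - x k)) := by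
          apply mul_le_mul_of_nonneg_right hpow (mul_nonneg hP1x hP2x)
      _ = (∏ k ∈ T, x k) * (r ^ (Tᶜ.erase i).card * ∏ k ∈ Tᶜ.erase i, (1 - x k)) := by ring
      _ ≤ (∏ k ∈ T, w k) * ∏ k ∈ Tᶜ.erase i, (1 - w k) := by
          apply mul_le_mul hP1 hP2 (mul_nonneg (pow_nonneg hr0 _) hP2x) hP1w
  calc r ^ (n - 1) * ((f (insert i T) - f T) * qw i T x)
      = (f (insert i T) - f T) * (r ^ (n - 1) * qw i T x) := by ring
    _ ≤ (f (insert i T) - f T) * qw i T w := mul_le_mul_of_nonneg_left key hdf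

lemma mlext_nonneg {n : ℕ} (f : Finset (Fin n) → ℝ) (hfnn : ∀ S, 0 ≤ f S)
    (x : Fin n → ℝ) (hx0 : ∀ j, 0 ≤ x j) (hx1 : ∀ j, x j ≤ 1) : 0 ≤ mlext f x :=
  Finset.sum_nonneg fun S _ => mul_nonneg (hfnn S)
    (mul_nonneg (Finset.prod_nonneg fun k _ => hx0 k)
      (Finset.prod_nonneg fun k _ => by linarith [hx1 k]))

lemma steplow {n : ℕ} (f : Finset (Fin n) → ℝ)
    (hfmono : ∀ S T : Finset (Fin n), S ⊆ T → f S ≤ f T) (r : ℝ) (x y : Fin n → ℝ)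
    (hr0 : 0 ≤ r) (hr1 : r ≤ 1)
    (hx0 : ∀ j, 0 ≤ x j) (hxy : ∀ j, x j ≤ y j) (hy1 : ∀ j, y j ≤ 1)
    (hry : ∀ j, r * (1 - x j) ≤ 1 - y j) :
    r ^ (n - 1) * ∑ m, (y m - x m) * pd f m x ≤ mlext f y - mlext f x := by
  classical
  have key : ∀ A : Finset (Fin n),
      r ^ (n - 1) * ∑ m ∈ A, (y m - x m) * pd f m x
        ≤ mlext f (fun j => if j ∈ A then y j else x j) - mlext f x := by
    intro A
    induction A using Finset.induction_on with
    | empty => simp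
    | @insert i A hiA ih =>
      set h : Fin n → ℝ := fun j => if j ∈ A then y j else x j with hh
      have h0 : ∀ j, 0 ≤ h j := fun j => by
        rw [hh]; dsimp only; split
        · exact le_trans (hx0 j) (hxy j)
        · exact hx0 j
      have hxh : ∀ j, x j ≤ h j := fun j => by
        rw [hh]; dsimp only; split
        · exact hxy j
        · exact le_rfl
      have hh1 : ∀ j, h j ≤ 1 := fun j => by
        rw [hh]; dsimp only; split
        · exact hy1 j
        · exact le_trans (hxy j) (hy1 j)
      have hrh : ∀ j, r * (1 - x j) ≤ 1 - h j := fun j => by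
        rw [hh]; dsimp only; split
        · exact hry j
        · nlinarith [hxy j, hy1 j]
      have hupd1 : (fun j => if j ∈ insert i A then y j else x j) = Function.update h i (y i) := by
        funext j
        by_cases hj : j = i
        · subst hj; simp [Function.update_self, hh]
        · simp [Function.update_of_ne hj, hh, Finset.mem_insert, hj]
      have hupd0 : h = Function.update h i (x i) := by
        have : h i = x i := by rw [hh]; simp [hiA]
        rw [← this, Function.update_eq_self]
      have hdiff : mlext f (fun j => if j ∈ insert i A then y j else x j) - mlext f h
          = (y i - x i) * pd f i h := by
        rw [hupd1]
        conv_lhs => rw [hupd0]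
        rw [← mlext_update_sub f h i (y i) (x i)]
        rw [← hupd0]
      have hpd : r ^ (n - 1) * pd f i x ≤ pd f i h :=
        pd_mono f hfmono i r x h hr0 hr1 hx0 hxh hh1 hrh
      have hyx : 0 ≤ y i - x i := by linarith [hxy i]
      rw [Finset.sum_insert hiA]
      have hstep : r ^ (n - 1) * ((y i - x i) * pd f i x) ≤ (y i - x i) * pd f i h := by
        calc r ^ (n - 1) * ((y i - x i) * pd f i x)
            = (y i - x i) * (r ^ (n - 1) * pd f i x) := by ring
          _ ≤ (y i - x i) * pd f i h := mul_le_mul_of_nonneg_left hpd hyx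
      have := ih
      rw [mul_add]
      linarith [hdiff, hstep, ih]
  have huniv := key Finset.univ
  simpa using huniv

lemma diff_fin_prod {n : ℕ} (u : Finset (Fin n)) (g : Fin n → (Fin n → ℝ) → ℝ)
    (hg : ∀ i, Differentiable ℝ (g i)) :
    Differentiable ℝ (fun x : Fin n → ℝ => ∏ i ∈ u, g i x) := by
  classical
  induction u using Finset.induction_on with
  | empty => simpa using differentiable_const (1 : ℝ)
  | @insert i A hiA ih =>
    have : (fun x : Fin n → ℝ => ∏ k ∈ insert i A, g k x)
        = fun x => g i x * ∏ k ∈ A, g k x := by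
      funext x; exact Finset.prod_insert hiA
    rw [this]
    exact (hg i).mul ih

lemma mlext_differentiable {n : ℕ} (f : Finset (Fin n) → ℝ) :
    Differentiable ℝ (mlext f) := by
  have : mlext f = fun x : Fin n → ℝ =>
      ∑ S ∈ (Finset.univ : Finset (Finset (Fin n))), f S * ((∏ i ∈ S, x i) * ∏ i ∈ Sᶜ, (1 - x i)) := rfl
  rw [this]
  apply Differentiable.fun_sum
  intro S _
  apply Differentiable.const_mul
  apply Differentiable.mul
  · exact diff_fin_prod S _ fun i => differentiable_pi.mp differentiable_id i
  · exact diff_fin_prod Sᶜ _ fun i => (differentiable_const (1:ℝ)).sub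
      (differentiable_pi.mp differentiable_id i)

lemma grad_mlext {n : ℕ} (f : Finset (Fin n) → ℝ) (w : Fin n → ℝ) (i : Fin n) :
    grad (mlext f) w i = pd f i w := by
  have hdiff : DifferentiableAt ℝ (mlext f) w := (mlext_differentiable f) w
  have hline : ∀ t : ℝ, w + t • (Pi.single i 1 : Fin n → ℝ) = Function.update w i (w i + t) := by
    intro t; funext j
    by_cases hj : j = i
    · subst hj; simp
    · simp [Function.update_of_ne hj, Pi.single_eq_of_ne hj]
  have h1 : HasDerivAt (fun t : ℝ => mlext f (w + t • (Pi.single i 1 : Fin n → ℝ))) (pd f i w) 0 := by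
    have he : (fun t : ℝ => mlext f (w + t • (Pi.single i 1 : Fin n → ℝ)))
        = fun t => ((∑ T ∈ BB n i, f T * qw i T w) + (w i + t) * pd f i w) := by
      funext t; rw [hline t, mlext_update]
    rw [he]
    have hid : HasDerivAt (fun t : ℝ => w i + t) 1 0 := (hasDerivAt_id 0).const_add (w i)
    simpa using (hid.mul_const (pd f i w)).const_add (∑ T ∈ BB n i, f T * qw i T w)
  have hγ : HasDerivAt (fun t : ℝ => w + t • (Pi.single i 1 : Fin n → ℝ)) ((Pi.single i 1 : Fin n → ℝ)) (0:ℝ) := by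
    simpa using ((hasDerivAt_id (0:ℝ)).smul_const ((Pi.single i 1 : Fin n → ℝ))).const_add w
  have h2 : HasDerivAt (fun t : ℝ => mlext f (w + t • (Pi.single i 1 : Fin n → ℝ)))
      (fderiv ℝ (mlext f) w ((Pi.single i 1 : Fin n → ℝ))) 0 := by
    have hγ0 : (fun t : ℝ => w + t • (Pi.single i 1 : Fin n → ℝ)) 0 = w := by simp
    have hF : HasFDerivAt (mlext f) (fderiv ℝ (mlext f) w)
        ((fun t : ℝ => w + t • (Pi.single i 1 : Fin n → ℝ)) 0) := by
      rw [hγ0]; exact hdiff.hasFDerivAt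
    exact hF.comp_hasDerivAt 0 hγ
  have := h1.unique h2
  unfold grad; exact this.symm

lemma harm_aux : ∀ M : ℕ, ∑ j ∈ Finset.range M, (1:ℝ)/(j+2) ≤ Real.log (M+1) := by
  intro M
  induction M with
  | zero => simp
  | succ M ih =>
    rw [Finset.sum_range_succ]
    have h1 : (0:ℝ) < M+1 := by positivity
    have h2 : (0:ℝ) < M+2 := by positivity
    have hlog : Real.log (M+1) - Real.log (M+2) ≤ -(1/(M+2)) := by
      have hq : (0:ℝ) < (M+1)/(M+2) := by positivity
      have := Real.log_le_sub_one_of_pos hq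
      rw [Real.log_div (ne_of_gt h1) (ne_of_gt h2)] at this
      have he : (M+1:ℝ)/(M+2) - 1 = -(1/(M+2)) := by field_simp; norm_num
      linarith [he ▸ this]
    have hcast : ((M+1:ℕ):ℝ) + 1 = (M:ℝ) + 2 := by push_cast; ring
    rw [hcast]
    push_cast
    linarith [ih]

lemma harm_bound (N : ℕ) : ∑ t ∈ Finset.range (N - 1), (1:ℝ)/((N:ℝ) - t) ≤ Real.log N := by
  rcases Nat.eq_zero_or_pos N with h0 | hN
  · subst h0; simp
  have hrefl := Finset.sum_range_reflect (fun t => (1:ℝ)/((N:ℝ) - t)) (N - 1)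
  have hc : ∀ j ∈ Finset.range (N - 1),
      (1:ℝ)/((N:ℝ) - ((N - 1 - 1 - j : ℕ):ℝ)) = 1/((j:ℝ)+2) := by
    intro j hj
    have hj' : j < N - 1 := Finset.mem_range.mp hj
    have h2N : 2 ≤ N := by omega
    have : ((N - 1 - 1 - j : ℕ):ℝ) = (N:ℝ) - 2 - j := by
      have : N - 1 - 1 - j = N - (2 + j) := by omega
      rw [this, Nat.cast_sub (by omega)]
      push_cast; ring
    rw [this]; ring_nf
  calc ∑ t ∈ Finset.range (N - 1), (1:ℝ)/((N:ℝ) - t)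
      = ∑ j ∈ Finset.range (N - 1), (1:ℝ)/((N:ℝ) - ((N - 1 - 1 - j : ℕ):ℝ)) := hrefl.symm
    _ = ∑ j ∈ Finset.range (N - 1), (1:ℝ)/((j:ℝ)+2) := Finset.sum_congr rfl hc
    _ ≤ Real.log ((N - 1 : ℕ) + 1) := harm_aux (N - 1)
    _ = Real.log N := by
        congr 1
        rw [Nat.cast_sub (by omega)]
        push_cast; ring

lemma numclaim (n N : ℕ) (hn : 2 ≤ n) (hn3 : ((n:ℝ))^3 < N) :
    (N:ℝ)/2 ≤ ((N:ℝ) - 1) - ((n:ℝ) - 1) * Real.log N := by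
  have hNpos : (0:ℝ) < N := by
    have : (0:ℝ) < ((n:ℝ))^3 := by positivity
    linarith
  set m := (N:ℝ) ^ ((1:ℝ)/3) with hm
  have hm_pos : 0 < m := Real.rpow_pos_of_pos hNpos _
  have hm3 : m ^ (3:ℕ) = N := by
    rw [hm, ← Real.rpow_natCast ((N:ℝ) ^ ((1:ℝ)/3)) 3, ← Real.rpow_mul (le_of_lt hNpos)]
    norm_num
  have hlogm : Real.log N = 3 * Real.log m := by
    rw [← hm3, Real.log_pow]; push_cast; ring
  have hlogm_le : Real.log m ≤ m - 1 := Real.log_le_sub_one_of_pos hm_pos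
  have hnm : (n:ℝ) ≤ m := by
    by_contra h
    push_neg at h
    have hn0 : (0:ℝ) ≤ n := Nat.cast_nonneg n
    have : m^(3:ℕ) < (n:ℝ)^(3:ℕ) := by
      apply pow_lt_pow_left₀ h (le_of_lt hm_pos)
      norm_num
    rw [hm3] at this
    norm_num at this
    linarith
  have hm2 : 2 ≤ m := le_trans (by exact_mod_cast hn) hnm
  have hn2r : (2:ℝ) ≤ (n:ℝ) := by exact_mod_cast hn
  have hcube : (8:ℝ) ≤ (n:ℝ)^3 := by
    have := pow_le_pow_left₀ (by norm_num : (0:ℝ) ≤ 2) hn2r 3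
    norm_num at this; linarith
  have hlogN0 : 0 ≤ Real.log N := Real.log_nonneg (by linarith)
  have h1 : ((n:ℝ) - 1) * Real.log N ≤ (m - 1) * (3 * (m - 1)) := by
    apply mul_le_mul (by linarith) (by linarith [hlogm_le]) hlogN0 (by linarith)
  have h2 : (0:ℝ) ≤ (m - 2)^3 := by
    apply pow_nonneg; linarith
  nlinarith [hm3, h1, h2]

set_option maxHeartbeats 1000000 in
/-- Theorem `discretizemultilinear`: discretized jump-start greedy
for multilinear extensions.  `f : 2^[n] → ℝ≥0` non-negative monotone with
multilinear extension `F`; `P ⊆ [0,1]^n` downward-closed compact convex;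
`v* ∈ argmax_{x∈P} ‖x‖₁`; `OPT = max_{x∈P} F`; `α ∈ (0,1)`; `μ ∈ (0,1]` with
`max_{v∈P} vᵀ∇F(x) ≥ μ(OPT - F x)` whenever `x ∈ P`, `x ≥ α v*`.  With step size
`δ > 0`, `1/δ = N ∈ ℕ`, `δ ≤ min{(1-α)/n³, 1/((1-α)μ)}` and iterates `x⁰ = α v*`,
`x^{k+1} = x^k + δ(1-α)·v_max(x^k)`, the output satisfies
`F(x¹) ≥ (1 - exp(-(1/2)(1-α)μ))·(1 - n²δ/(1-α))·OPT`. -/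
theorem stmt8 {n : ℕ} (α μ δ : ℝ) (N : ℕ)
    (hα : α ∈ Set.Ioo (0 : ℝ) 1) (hμ : μ ∈ Set.Ioc (0 : ℝ) 1)
    (hδ : 0 < δ) (hδN : δ * N = 1)
    (hδ1 : δ * (n : ℝ) ^ 3 ≤ 1 - α) (hδ2 : δ * ((1 - α) * μ) ≤ 1)
    (f : Finset (Fin n) → ℝ)
    (hfnn : ∀ S, 0 ≤ f S) (hfmono : ∀ S T : Finset (Fin n), S ⊆ T → f S ≤ f T)
    (P : Set (Fin n → ℝ)) (hPbox : P ⊆ box n) (hPconv : Convex ℝ P)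
    (hPcomp : IsCompact P)
    (hPdc : ∀ y ∈ P, ∀ z : Fin n → ℝ, 0 ≤ z → z ≤ y → z ∈ P)
    (vstar : Fin n → ℝ) (hvP : vstar ∈ P) (hvmax : ∀ y ∈ P, l1 y ≤ l1 vstar)
    (xopt : Fin n → ℝ) (hoptP : xopt ∈ P)
    (hopt : ∀ y ∈ P, mlext f y ≤ mlext f xopt)
    (hmu : ∀ x ∈ P, α • vstar ≤ x →
      ∃ v ∈ P, μ * (mlext f xopt - mlext f x) ≤ dotp v (grad (mlext f) x))
    (vmax : (Fin n → ℝ) → Fin n → ℝ)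
    (xs : ℕ → Fin n → ℝ) (hxs0 : xs 0 = α • vstar)
    (hvmaxP : ∀ k < N, vmax (xs k) ∈ P ∧
      ∀ w ∈ P, dotp w (grad (mlext f) (xs k)) ≤
        dotp (vmax (xs k)) (grad (mlext f) (xs k)))
    (hstep : ∀ k < N, xs (k + 1) = xs k + (δ * (1 - α)) • vmax (xs k)) :
    (1 - Real.exp (-(1 / 2 * ((1 - α) * μ)))) * (1 - (n : ℝ) ^ 2 * δ / (1 - α)) *
        mlext f xopt ≤ mlext f (xs N) := by
  classical
  obtain ⟨hα0, hα1⟩ := hα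
  obtain ⟨hμ0, hμ1⟩ := hμ
  have h1α : (0:ℝ) < 1 - α := by linarith
  have hN0 : 0 < N := by
    rcases Nat.eq_zero_or_pos N with h | h
    · exfalso; rw [h] at hδN; norm_num at hδN
    · exact h
  have hNr : (0:ℝ) < (N:ℝ) := by exact_mod_cast hN0
  have hbox : ∀ z ∈ P, (∀ j, 0 ≤ z j) ∧ (∀ j, z j ≤ 1) := by
    intro z hz
    obtain ⟨h0, h1⟩ := hPbox hz
    exact ⟨fun j => h0 j, fun j => h1 j⟩
  have hvs := hbox vstar hvP
  have hv : ∀ t, t < N → vmax (xs t) ∈ P := fun t ht => (hvmaxP t ht).1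
  have hvb : ∀ t, t < N → (∀ j, 0 ≤ vmax (xs t) j) ∧ (∀ j, vmax (xs t) j ≤ 1) :=
    fun t ht => hbox _ (hv t ht)
  -- trajectory formula
  have hform : ∀ k, k ≤ N →
      xs k = α • vstar + ∑ t ∈ Finset.range k, (δ * (1 - α)) • vmax (xs t) := by
    intro k
    induction k with
    | zero => intro _; simp [hxs0]
    | succ k ih =>
      intro hk
      have hk' : k < N := Nat.lt_of_succ_le hk
      rw [hstep k hk', Finset.sum_range_succ, ← add_assoc]
      congr 1
      exact ih (le_of_lt hk')
  have hcoord : ∀ k, k ≤ N → ∀ j,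
      xs k j = α * vstar j + ∑ t ∈ Finset.range k, δ * (1 - α) * vmax (xs t) j := by
    intro k hk j
    rw [hform k hk]
    simp [Finset.sum_apply, Pi.add_apply, Pi.smul_apply, smul_eq_mul]
  have hlb : ∀ k, k ≤ N → ∀ j, α * vstar j ≤ xs k j := by
    intro k hk j
    rw [hcoord k hk j]
    have h0 : 0 ≤ ∑ t ∈ Finset.range k, δ * (1 - α) * vmax (xs t) j :=
      Finset.sum_nonneg fun t ht => by
        have htN : t < N := lt_of_lt_of_le (Finset.mem_range.mp ht) hk
        exact mul_nonneg (mul_nonneg (le_of_lt hδ) (le_of_lt h1α)) ((hvb t htN).1 j)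
    linarith
  have hnn : ∀ k, k ≤ N → ∀ j, 0 ≤ xs k j := fun k hk j =>
    le_trans (mul_nonneg (le_of_lt hα0) (hvs.1 j)) (hlb k hk j)
  have hub : ∀ k, k ≤ N → ∀ j, xs k j ≤ α + (1 - α) * (δ * k) := by
    intro k hk j
    rw [hcoord k hk j]
    have h1 : α * vstar j ≤ α := by nlinarith [hvs.2 j, hvs.1 j]
    have h2 : ∑ t ∈ Finset.range k, δ * (1 - α) * vmax (xs t) j
        ≤ ∑ _t ∈ Finset.range k, δ * (1 - α) := by
      apply Finset.sum_le_sum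
      intro t ht
      have htN : t < N := lt_of_lt_of_le (Finset.mem_range.mp ht) hk
      have hh := mul_le_mul_of_nonneg_left ((hvb t htN).2 j) (mul_nonneg hδ.le h1α.le)
      rw [mul_one] at hh
      linarith [hh]
    rw [Finset.sum_const, Finset.card_range, nsmul_eq_mul] at h2
    nlinarith [h2, h1]
  have hub1 : ∀ k, k ≤ N → ∀ j, xs k j ≤ 1 := by
    intro k hk j
    have h1 := hub k hk j
    have hkN : (k:ℝ) ≤ (N:ℝ) := by exact_mod_cast hk
    have h2 : δ * (k:ℝ) ≤ δ * (N:ℝ) := mul_le_mul_of_nonneg_left hkN (le_of_lt hδ)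
    rw [hδN] at h2
    nlinarith [h2]
  have hmono_traj : ∀ k k', k ≤ k' → k' ≤ N → ∀ j, xs k j ≤ xs k' j := by
    intro k k' hkk' hk' j
    rw [hcoord k (le_trans hkk' hk') j, hcoord k' hk' j]
    have h3 : ∑ t ∈ Finset.range k, δ * (1 - α) * vmax (xs t) j
        ≤ ∑ t ∈ Finset.range k', δ * (1 - α) * vmax (xs t) j := by
      apply Finset.sum_le_sum_of_subset_of_nonneg (Finset.range_subset_range.mpr hkk')
      intro t ht _
      have htN : t < N := lt_of_lt_of_le (Finset.mem_range.mp ht) hk'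
      exact mul_nonneg (mul_nonneg (le_of_lt hδ) (le_of_lt h1α)) ((hvb t htN).1 j)
    linarith
  -- xs N ∈ P via convex combination
  have hxsN : xs N ∈ P := by
    have hw0 : ∀ t ∈ Finset.range (N+1), (0:ℝ) ≤ (if t = N then α else δ * (1 - α)) := by
      intro t _
      split
      · linarith
      · nlinarith
    have hw1 : ∑ t ∈ Finset.range (N+1), (if t = N then α else δ * (1 - α)) = 1 := by
      rw [Finset.sum_range_succ, if_pos rfl]
      have he : ∀ t ∈ Finset.range N, (if t = N then α else δ * (1 - α)) = δ * (1 - α) := by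
        intro t ht
        have : t ≠ N := by have := Finset.mem_range.mp ht; omega
        simp [this]
      rw [Finset.sum_congr rfl he, Finset.sum_const, Finset.card_range, nsmul_eq_mul]
      nlinarith [hδN]
    have hz : ∀ t ∈ Finset.range (N+1), (if t = N then vstar else vmax (xs t)) ∈ P := by
      intro t ht
      split
      · exact hvP
      · rename_i hne
        have : t < N := by have := Finset.mem_range.mp ht; omega
        exact hv t this
    have hmem := Convex.sum_mem hPconv hw0 hw1 hz
    have hxeq : xs N = ∑ t ∈ Finset.range (N+1),
        (if t = N then α else δ * (1 - α)) • (if t = N then vstar else vmax (xs t)) := by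
      rw [hform N le_rfl, Finset.sum_range_succ, if_pos rfl, if_pos rfl, add_comm]
      congr 1
      apply Finset.sum_congr rfl
      intro t ht
      have hne : t ≠ N := by have := Finset.mem_range.mp ht; omega
      simp [hne]
    rw [hxeq]
    exact hmem
  have hxsP : ∀ k, k ≤ N → xs k ∈ P := by
    intro k hk
    apply hPdc (xs N) hxsN (xs k)
    · intro j
      simpa using hnn k hk j
    · intro j
      exact hmono_traj k N hk le_rfl j
  -- abbreviations
  set ρ : ℕ → ℝ := fun t => (1 - 1/((N:ℝ) - (t:ℕ)))^(n - 1) with hρdef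
  have hρ01 : ∀ t, t < N → 0 ≤ 1 - 1/((N:ℝ) - t) ∧ 1 - 1/((N:ℝ) - t) ≤ 1 := by
    intro t ht
    have h1 : (1:ℝ) ≤ (N:ℝ) - t := by
      have : ((t+1:ℕ):ℝ) ≤ (N:ℝ) := by exact_mod_cast Nat.succ_le_of_lt ht
      push_cast at this
      linarith
    constructor
    · have h2 : 1/((N:ℝ) - t) ≤ 1 := by
        rw [div_le_one (by linarith)]
        linarith
      linarith
    · have h2 : 0 < 1/((N:ℝ) - t) := by positivity
      linarith
  have hρnn : ∀ t, t < N → 0 ≤ ρ t := fun t ht => pow_nonneg (hρ01 t ht).1 _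
  -- per-step inequality
  have hstep_ineq : ∀ k, k < N →
      mlext f xopt - mlext f (xs (k+1))
        ≤ (1 - (δ * (1 - α) * μ) * ρ k) * (mlext f xopt - mlext f (xs k)) := by
    intro k hk
    have hkle : k ≤ N := le_of_lt hk
    have hk1le : k + 1 ≤ N := Nat.succ_le_of_lt hk
    have hNk : (0:ℝ) < (N:ℝ) - k := by
      have : ((k+1:ℕ):ℝ) ≤ (N:ℝ) := by exact_mod_cast Nat.succ_le_of_lt hk
      push_cast at this
      linarith
    have hyeq : ∀ j, xs (k+1) j = xs k j + δ * (1 - α) * vmax (xs k) j := by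
      intro j
      rw [hstep k hk]
      simp [Pi.add_apply, Pi.smul_apply, smul_eq_mul]
    have hr0 := (hρ01 k hk).1
    have hr1 := (hρ01 k hk).2
    have hx0 : ∀ j, 0 ≤ xs k j := hnn k hkle
    have hxy : ∀ j, xs k j ≤ xs (k+1) j := fun j => hmono_traj k (k+1) (Nat.le_succ k) hk1le j
    have hy1 : ∀ j, xs (k+1) j ≤ 1 := hub1 (k+1) hk1le
    have hkey : ∀ j, δ * (1 - α) * ((N:ℝ) - k) ≤ 1 - xs k j := by
      intro j
      have h1 := hub k hkle j
      have h2 : δ * (1 - α) * ((N:ℝ) - k) = (1 - α) * (1 - δ * k) := by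
        linear_combination (1 - α) * hδN
      rw [h2]
      nlinarith [h1]
    have hry : ∀ j, (1 - 1/((N:ℝ) - k)) * (1 - xs k j) ≤ 1 - xs (k+1) j := by
      intro j
      have hdivk : δ * (1 - α) ≤ (1 - xs k j)/((N:ℝ) - k) := (le_div_iff₀ hNk).mpr (hkey j)
      have hre : (1 - 1/((N:ℝ) - k)) * (1 - xs k j)
          = (1 - xs k j) - (1 - xs k j)/((N:ℝ) - k) := by ring
      have hv1 : vmax (xs k) j ≤ 1 := (hvb k hk).2 j
      have hv0 : 0 ≤ vmax (xs k) j := (hvb k hk).1 j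
      have hstep2 : δ * (1 - α) * vmax (xs k) j ≤ δ * (1 - α) := by
        have hh := mul_le_mul_of_nonneg_left hv1 (mul_nonneg hδ.le h1α.le)
        rw [mul_one] at hh
        linarith [hh]
      rw [hre, hyeq j]
      linarith
    have main := steplow f hfmono (1 - 1/((N:ℝ) - k)) (xs k) (xs (k+1))
      hr0 hr1 hx0 hxy hy1 hry
    have hsum : ∑ m, (xs (k+1) m - xs k m) * pd f m (xs k)
        = δ * (1 - α) * ∑ m, vmax (xs k) m * pd f m (xs k) := by
      rw [Finset.mul_sum]
      apply Finset.sum_congr rfl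
      intro m _
      rw [hyeq m]
      ring
    have hdot_eq : dotp (vmax (xs k)) (grad (mlext f) (xs k))
        = ∑ m, vmax (xs k) m * pd f m (xs k) := by
      rw [dotp]
      apply Finset.sum_congr rfl
      intro m _
      rw [grad_mlext]
    obtain ⟨v₀, hv₀P, hv₀⟩ := hmu (xs k) (hxsP k hkle) (by
      intro j
      simpa [Pi.smul_apply, smul_eq_mul] using hlb k hkle j)
    have hdot : μ * (mlext f xopt - mlext f (xs k)) ≤ ∑ m, vmax (xs k) m * pd f m (xs k) := by
      rw [← hdot_eq]
      exact le_trans hv₀ ((hvmaxP k hk).2 v₀ hv₀P)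
    have hδα : (0:ℝ) ≤ δ * (1 - α) := by nlinarith
    have hρk : ρ k = (1 - 1/((N:ℝ) - k))^(n-1) := by rw [hρdef]
    have h2 : ρ k * (δ * (1 - α) * (μ * (mlext f xopt - mlext f (xs k))))
        ≤ mlext f (xs (k+1)) - mlext f (xs k) := by
      have ha := mul_le_mul_of_nonneg_left hdot hδα
      have hb := mul_le_mul_of_nonneg_left ha (hρnn k hk)
      calc ρ k * (δ * (1 - α) * (μ * (mlext f xopt - mlext f (xs k))))
          ≤ ρ k * (δ * (1 - α) * ∑ m, vmax (xs k) m * pd f m (xs k)) := hb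
        _ = (1 - 1/((N:ℝ) - k))^(n-1) * ∑ m, (xs (k+1) m - xs k m) * pd f m (xs k) := by
            rw [hρk, hsum]
        _ ≤ mlext f (xs (k+1)) - mlext f (xs k) := main
    have h3 : (1 - (δ * (1 - α) * μ) * ρ k) * (mlext f xopt - mlext f (xs k))
        = (mlext f xopt - mlext f (xs k))
          - ρ k * (δ * (1 - α) * (μ * (mlext f xopt - mlext f (xs k)))) := by ring
    linarith [h2, h3]
  -- nonnegativity / upper bound facts
  have hFnn : ∀ k, k ≤ N → 0 ≤ mlext f (xs k) :=
    fun k hk => mlext_nonneg f hfnn _ (hnn k hk) (hub1 k hk)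
  have hOPTub : ∀ k, k ≤ N → mlext f (xs k) ≤ mlext f xopt :=
    fun k hk => hopt _ (hxsP k hk)
  have hOPT0 : 0 ≤ mlext f xopt :=
    mlext_nonneg f hfnn xopt (hbox xopt hoptP).1 (hbox xopt hoptP).2
  -- recursion
  have hrec : ∀ k, k ≤ N → mlext f xopt - mlext f (xs k)
      ≤ mlext f xopt * Real.exp (-((δ * (1 - α) * μ) * ∑ t ∈ Finset.range k, ρ t)) := by
    intro k
    induction k with
    | zero =>
      intro _
      simp only [Finset.range_zero, Finset.sum_empty, mul_zero, neg_zero, Real.exp_zero, mul_one]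
      linarith [hFnn 0 (Nat.zero_le N)]
    | succ k ih =>
      intro hk
      have hk' : k < N := Nat.lt_of_succ_le hk
      have hgk : 0 ≤ mlext f xopt - mlext f (xs k) := by
        linarith [hOPTub k (le_of_lt hk')]
      have h1 := hstep_ineq k hk'
      have hexp : (1 - (δ * (1 - α) * μ) * ρ k) ≤ Real.exp (-((δ * (1 - α) * μ) * ρ k)) := by
        have := Real.add_one_le_exp (-((δ * (1 - α) * μ) * ρ k))
        linarith
      have h2 : (1 - (δ * (1 - α) * μ) * ρ k) * (mlext f xopt - mlext f (xs k))
          ≤ Real.exp (-((δ * (1 - α) * μ) * ρ k)) * (mlext f xopt - mlext f (xs k)) :=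
        mul_le_mul_of_nonneg_right hexp hgk
      have h3 : Real.exp (-((δ * (1 - α) * μ) * ρ k)) * (mlext f xopt - mlext f (xs k))
          ≤ Real.exp (-((δ * (1 - α) * μ) * ρ k)) *
            (mlext f xopt * Real.exp (-((δ * (1 - α) * μ) * ∑ t ∈ Finset.range k, ρ t))) :=
        mul_le_mul_of_nonneg_left (ih (le_of_lt hk')) (le_of_lt (Real.exp_pos _))
      have h4 : Real.exp (-((δ * (1 - α) * μ) * ρ k)) *
            (mlext f xopt * Real.exp (-((δ * (1 - α) * μ) * ∑ t ∈ Finset.range k, ρ t)))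
          = mlext f xopt * Real.exp (-((δ * (1 - α) * μ) * ∑ t ∈ Finset.range (k+1), ρ t)) := by
        rw [Finset.sum_range_succ, mul_add, neg_add, Real.exp_add]
        ring
      linarith [h1, h2, h3, h4]
  -- numeric bound on the sum of ρ
  have hρsum : (N:ℝ)/2 ≤ ∑ t ∈ Finset.range N, ρ t := by
    rcases le_or_gt n 1 with hn1 | hn1
    · have hz : n - 1 = 0 := by omega
      have he : ∀ t ∈ Finset.range N, ρ t = 1 := by
        intro t _
        rw [hρdef]
        simp [hz]
      rw [Finset.sum_congr rfl he, Finset.sum_const, Finset.card_range, nsmul_eq_mul, mul_one]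
      linarith
    · have hn2 : 2 ≤ n := hn1
      have hn3 : ((n:ℝ))^3 < (N:ℝ) := by
        have h1 : δ * (n:ℝ)^3 < δ * N := by
          rw [hδN]
          linarith
        exact lt_of_mul_lt_mul_left h1 (le_of_lt hδ)
      have hsplit : ∑ t ∈ Finset.range N, ρ t = ∑ t ∈ Finset.range (N-1), ρ t + ρ (N-1) := by
        conv_lhs => rw [show N = (N-1)+1 by omega]
        rw [Finset.sum_range_succ]
      have hρlast : 0 ≤ ρ (N-1) := hρnn (N-1) (by omega)
      have hlb2 : ∀ t ∈ Finset.range (N-1), 1 - ((n:ℝ) - 1) * (1/((N:ℝ)-t)) ≤ ρ t := by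
        intro t ht
        have htN : t < N := by have := Finset.mem_range.mp ht; omega
        have h1 : (1:ℝ) ≤ (N:ℝ) - t := by
          have : ((t+1:ℕ):ℝ) ≤ (N:ℝ) := by exact_mod_cast Nat.succ_le_of_lt htN
          push_cast at this
          linarith
        have hfrac1 : 1/((N:ℝ)-t) ≤ 1 := by
          rw [div_le_one (by linarith)]
          linarith
        have hb := one_add_mul_le_pow (a := -(1/((N:ℝ)-t))) (by linarith) (n-1)
        have hcast : ((n-1:ℕ):ℝ) = (n:ℝ)-1 := by
          rw [Nat.cast_sub (by omega)]
          norm_num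
        have hbase : (1 + -(1/((N:ℝ)-t))) = 1 - 1/((N:ℝ)-t) := by ring
        calc 1 - ((n:ℝ)-1)*(1/((N:ℝ)-t))
            = 1 + ((n-1:ℕ):ℝ) * (-(1/((N:ℝ)-t))) := by rw [hcast]; ring
          _ ≤ (1 + -(1/((N:ℝ)-t)))^(n-1) := hb
          _ = ρ t := by rw [hbase, hρdef]
      have hS := harm_bound N
      have hsum2 : ∑ t ∈ Finset.range (N-1), (1 - ((n:ℝ)-1)*(1/((N:ℝ)-t)))
          = ((N:ℝ)-1) - ((n:ℝ)-1) * ∑ t ∈ Finset.range (N-1), 1/((N:ℝ)-t) := by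
        rw [Finset.sum_sub_distrib, Finset.sum_const, Finset.card_range, ← Finset.mul_sum,
          nsmul_eq_mul, mul_one]
        congr 1
        rw [Nat.cast_sub hN0]
        norm_num
      have hnum := numclaim n N hn2 hn3
      have hn1r : (0:ℝ) ≤ (n:ℝ) - 1 := by
        have : (1:ℝ) ≤ (n:ℝ) := by exact_mod_cast le_trans (by norm_num) hn2
        linarith
      have hmul : ((n:ℝ)-1) * (∑ t ∈ Finset.range (N-1), 1/((N:ℝ)-t))
          ≤ ((n:ℝ)-1) * Real.log N := mul_le_mul_of_nonneg_left hS hn1r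
      calc (N:ℝ)/2 ≤ ((N:ℝ)-1) - ((n:ℝ)-1)*Real.log N := hnum
        _ ≤ ((N:ℝ)-1) - ((n:ℝ)-1) * ∑ t ∈ Finset.range (N-1), 1/((N:ℝ)-t) := by linarith
        _ = ∑ t ∈ Finset.range (N-1), (1 - ((n:ℝ)-1)*(1/((N:ℝ)-t))) := hsum2.symm
        _ ≤ ∑ t ∈ Finset.range (N-1), ρ t := Finset.sum_le_sum hlb2
        _ ≤ ∑ t ∈ Finset.range N, ρ t := by rw [hsplit]; linarith
  -- wrap up
  have hβ0 : (0:ℝ) ≤ δ * (1 - α) * μ := by positivity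
  have hexp_le : Real.exp (-((δ * (1 - α) * μ) * ∑ t ∈ Finset.range N, ρ t))
      ≤ Real.exp (-(1/2 * ((1-α)*μ))) := by
    apply Real.exp_le_exp.mpr
    have h1 : (δ * (1 - α) * μ) * ((N:ℝ)/2) ≤ (δ * (1 - α) * μ) * ∑ t ∈ Finset.range N, ρ t :=
      mul_le_mul_of_nonneg_left hρsum hβ0
    have h2 : (δ * (1 - α) * μ) * ((N:ℝ)/2) = 1/2 * ((1-α)*μ) := by
      linear_combination ((1 - α) * μ / 2) * hδN
    linarith
  have hlast : mlext f xopt - mlext f (xs N)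
      ≤ mlext f xopt * Real.exp (-(1/2 * ((1-α)*μ))) := by
    calc mlext f xopt - mlext f (xs N)
        ≤ mlext f xopt * Real.exp (-((δ * (1 - α) * μ) * ∑ t ∈ Finset.range N, ρ t)) :=
          hrec N le_rfl
      _ ≤ mlext f xopt * Real.exp (-(1/2 * ((1-α)*μ))) :=
          mul_le_mul_of_nonneg_left hexp_le hOPT0
  have hE0 : (0:ℝ) ≤ (n:ℝ)^2 * δ / (1-α) := by positivity
  have hexp1 : Real.exp (-(1/2 * ((1-α)*μ))) ≤ 1 := by
    have h1 : -(1/2 * ((1-α)*μ)) ≤ 0 := by nlinarith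
    calc Real.exp (-(1/2 * ((1-α)*μ))) ≤ Real.exp 0 := Real.exp_le_exp.mpr h1
      _ = 1 := Real.exp_zero
  nlinarith [hlast, hOPT0, hexp1, hE0,
    mul_nonneg (mul_nonneg
      (by linarith : (0:ℝ) ≤ 1 - Real.exp (-(1/2 * ((1-α)*μ)))) hE0) hOPT0]
end
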